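/- arXiv:2505.23335 — 14 statements merged into one kernel-verified Lean document; each statement's English description precedes it below -/
import Mathlib

section
/- Let p, δ ∈ (0,1) and n ≥ r ≥ 1 be integers. Suppose I is a random subset of {1,...,n} such that Pr[|I| ≥ (1-δ)n] ≥ p. Then for all but at most a 2rδ-fraction of the r-element subsets S ⊆ {1,...,n}, we have Pr[S ⊆ I] ≥ p/2. -/
open MeasureTheory Finset

/-!
Call an `r`-set `S` bad if `Pr[S ⊆ I] < p/2`, and let `F` be the family of bad sets. A set `A`
with `|A| ≥ (1-δ)n` misses at most `C(n,r) - C(|A|,r) ≤ δ r C(n,r)` of all `r`-sets, so it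
contains at least `|F| - δ r C(n,r)` bad sets. Double counting pairs `S ⊆ I` with `S ∈ F` gives
`(|F| - δ r C(n,r)) p ≤ ∑_{S ∈ F} Pr[S ⊆ I] ≤ |F| p/2`, i.e. `|F| ≤ 2 δ r C(n,r)`.
-/

theorem Nat.choose_succ_le_choose_add_sub_mul (k : ℕ) {m n : ℕ} (h : m ≤ n) :
    n.choose (k + 1) ≤ m.choose (k + 1) + (n - m) * (n - 1).choose k := by
  induction n, h using Nat.le_induction with
  | base => simp
  | succ n hmn ih =>
    have hmono : (n - 1).choose k ≤ n.choose k := Nat.choose_le_choose k (Nat.sub_le n 1)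
    calc (n + 1).choose (k + 1) = n.choose k + n.choose (k + 1) := Nat.choose_succ_succ n k
      _ ≤ n.choose k + (m.choose (k + 1) + (n - m) * n.choose k) := by
        gcongr; exact ih.trans (by gcongr)
      _ = m.choose (k + 1) + (n + 1 - m) * n.choose k := by
        rw [Nat.sub_add_comm hmn]; ring

theorem Nat.cast_choose_sub_cast_choose_le {δ : ℝ} (hδ : 0 ≤ δ) {m n : ℕ} (hmn : m ≤ n)
    (hm : (1 - δ) * n ≤ m) (r : ℕ) :
    (n.choose r : ℝ) - m.choose r ≤ δ * r * n.choose r := by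
  rcases r with _ | k
  · simp
  rcases n with _ | n
  · obtain rfl : m = 0 := Nat.le_zero.mp hmn
    simp
  have hstep : ((n + 1).choose (k + 1) : ℝ) ≤
      m.choose (k + 1) + ((n + 1 : ℕ) - m : ℝ) * n.choose k := by
    have := Nat.choose_succ_le_choose_add_sub_mul k hmn
    rw [Nat.add_sub_cancel] at this
    exact_mod_cast this
  have hid : ((n + 1 : ℕ) : ℝ) * n.choose k = (n + 1).choose (k + 1) * (k + 1 : ℕ) := by
    exact_mod_cast Nat.add_one_mul_choose_eq n k
  have hgap : ((n + 1 : ℕ) - m : ℝ) ≤ δ * (n + 1 : ℕ) := by linarith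
  push_cast at *
  nlinarith [Nat.cast_nonneg (α := ℝ) (n.choose k)]

theorem Finset.card_filter_not_subset_add_choose_le {α : Type*} [Fintype α] [DecidableEq α]
    {r : ℕ} {F : Finset (Finset α)} (hF : F ⊆ univ.powersetCard r) (A : Finset α) :
    #{S ∈ F | ¬S ⊆ A} + (#A).choose r ≤ (Fintype.card α).choose r := by
  have hdisj : Disjoint {S ∈ F | ¬S ⊆ A} (A.powersetCard r) :=
    disjoint_left.mpr fun S hS hSA => (mem_filter.mp hS).2 (mem_powersetCard.mp hSA).1
  rw [← card_powersetCard, ← card_univ, ← card_powersetCard, ← card_union_of_disjoint hdisj]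
  refine card_le_card (union_subset ((filter_subset _ _).trans hF) ?_)
  exact powersetCard_mono (subset_univ A)

theorem Finset.card_sub_le_card_filter_subset {α : Type*} [Fintype α] [DecidableEq α]
    {δ : ℝ} (hδ : 0 ≤ δ) {r : ℕ} {F : Finset (Finset α)} (hF : F ⊆ univ.powersetCard r)
    {A : Finset α} (hA : (1 - δ) * Fintype.card α ≤ #A) :
    (#F : ℝ) - δ * r * (Fintype.card α).choose r ≤ #{S ∈ F | S ⊆ A} := by
  have hsplit := card_filter_add_card_filter_not (s := F) (fun S => S ⊆ A)
  have hout := card_filter_not_subset_add_choose_le hF A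
  have hchoose := Nat.cast_choose_sub_cast_choose_le hδ (card_le_univ A) hA r
  have : (#{S ∈ F | S ⊆ A} : ℝ) + #{S ∈ F | ¬S ⊆ A} = #F := by exact_mod_cast hsplit
  have : (#{S ∈ F | ¬S ⊆ A} : ℝ) + (#A).choose r ≤ (Fintype.card α).choose r := by
    exact_mod_cast hout
  linarith

theorem MeasureTheory.measureReal_eq_sum_filter {α : Type*} [Fintype α] [MeasurableSpace α]
    [MeasurableSingletonClass α] (μ : Measure α) [IsFiniteMeasure μ] (P : α → Prop)
    [DecidablePred P] :
    μ.real {a | P a} = ∑ a with P a, μ.real {a} := by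
  rw [sum_measureReal_singleton, coe_filter_univ]

theorem MeasureTheory.mul_measureReal_le_sum_measureReal {α ι : Type*} [Fintype α]
    [MeasurableSpace α] [MeasurableSingletonClass α] (μ : Measure α) [IsFiniteMeasure μ]
    (F : Finset ι) (R : ι → α → Prop) [∀ i, DecidablePred (R i)] (P : α → Prop)
    [DecidablePred P] {c : ℝ}
    (hP : ∀ a, P a → (#F : ℝ) - c ≤ #{i ∈ F | R i a}) :
    (#F - c) * μ.real {a | P a} ≤ ∑ i ∈ F, μ.real {a | R i a} := by
  simp only [measureReal_eq_sum_filter, sum_filter]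
  rw [sum_comm, mul_sum]
  refine sum_le_sum fun a _ => ?_
  rw [← sum_filter, sum_const, nsmul_eq_mul]
  split_ifs with ha
  · exact mul_le_mul_of_nonneg_right (hP a ha) measureReal_nonneg
  · rw [mul_zero]; positivity

theorem stmt0_general (p δ : ℝ) (hp : p ∈ Set.Ioo (0:ℝ) 1) (hδ : δ ∈ Set.Ioo (0:ℝ) 1)
    (n r : ℕ)
    (μ : @Measure (Finset (Fin n)) ⊤)
    (hprob : @IsProbabilityMeasure _ ⊤ μ)
    (h : p ≤ (μ {A : Finset (Fin n) | (1 - δ) * n ≤ (A.card : ℝ)}).toReal) :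
    ((((Finset.univ : Finset (Fin n)).powersetCard r).filter
        (fun S => (μ {A : Finset (Fin n) | S ⊆ A}).toReal < p / 2)).card : ℝ)
      ≤ 2 * r * δ * (n.choose r) := by
  classical
  -- `μ` lives on the discrete σ-algebra, not on Mathlib's `MeasurableSpace (Finset _)` instance
  let _ : MeasurableSpace (Finset (Fin n)) := ⊤
  change p ≤ μ.real _ at h
  change (#{S ∈ univ.powersetCard r | μ.real {A | S ⊆ A} < p / 2} : ℝ) ≤ _
  set F := (univ.powersetCard r).filter fun S => μ.real {A : Finset (Fin n) | S ⊆ A} < p / 2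
  have hbad : ∑ S ∈ F, μ.real {A | S ⊆ A} ≤ #F * (p / 2) := by
    simpa using sum_le_card_nsmul F _ _ fun S hS => (mem_filter.mp hS).2.le
  have hcount := mul_measureReal_le_sum_measureReal μ F (fun S A => S ⊆ A)
    (fun A => (1 - δ) * n ≤ (#A : ℝ)) (c := δ * r * n.choose r) fun A hA => by
      simpa using card_sub_le_card_filter_subset (α := Fin n) hδ.1.le (filter_subset _ _)
        (by simpa using hA)
  have hc : 0 ≤ δ * r * n.choose r := by have := hδ.1; positivity
  nlinarith [hp.1]

/-- Let `p, δ ∈ (0,1)` and `n ≥ r ≥ 1`. Suppose `I` is a random subset of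
`{1,...,n}` (modelled as a probability measure `μ` on `Finset (Fin n)` with the discrete
σ-algebra) such that `Pr[|I| ≥ (1-δ)n] ≥ p`. Then for all but at most a `2rδ`-fraction of
the `r`-element subsets `S ⊆ {1,...,n}`, we have `Pr[S ⊆ I] ≥ p/2`. -/
theorem stmt0 (p δ : ℝ) (hp : p ∈ Set.Ioo (0:ℝ) 1) (hδ : δ ∈ Set.Ioo (0:ℝ) 1)
    (n r : ℕ) (hr : 1 ≤ r) (hrn : r ≤ n)
    (μ : @Measure (Finset (Fin n)) ⊤)
    (hprob : @IsProbabilityMeasure _ ⊤ μ)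
    (h : p ≤ (μ {A : Finset (Fin n) | (1 - δ) * n ≤ (A.card : ℝ)}).toReal) :
    ((((Finset.univ : Finset (Fin n)).powersetCard r).filter
        (fun S => (μ {A : Finset (Fin n) | S ⊆ A}).toReal < p / 2)).card : ℝ)
      ≤ 2 * r * δ * (n.choose r) :=
  stmt0_general p δ hp hδ n r μ hprob h
end

section
/- Let n ≥ d ≥ 1 and m ≥ 1 be integers, and let F ∈ {ℝ, ℂ}. If a matrix A ∈ F^{d×n} does not contain more than m pairwise column-disjoint nonsingular d×d submatrices, then at most an (md²/n)-fraction of the d×d submatrices of A are nonsingular. -/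
/-!
Let `G` be the family of column sets of nonsingular `d × d` submatrices. A maximal pairwise
disjoint subfamily of `G` has at most `m` members, so the union `U` of its members has at most
`m d` columns, and by maximality every member of `G` meets `U`. Each column lies in exactly
`d/n · (n choose d)` of the `d`-subsets, hence
`|G| ≤ |U| · d/n · (n choose d) ≤ (m d²/n) (n choose d)`.
-/

open Finset

namespace Finset

variable {α : Type*} [DecidableEq α]

theorem exists_pairwiseDisjoint_subset_not_disjoint_biUnion (G : Finset (Finset α)) :
    ∃ 𝒮 ⊆ G, (𝒮 : Set (Finset α)).PairwiseDisjoint id ∧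
      ∀ s ∈ G, s.Nonempty → ¬Disjoint s (𝒮.biUnion id) := by
  classical
  set D := G.powerset.filter fun 𝒮 : Finset (Finset α) => (𝒮 : Set (Finset α)).PairwiseDisjoint id
  obtain ⟨𝒮, h𝒮, hmax⟩ := exists_max_image D card ⟨∅, by simp [D]⟩
  rw [mem_filter, mem_powerset] at h𝒮
  refine ⟨𝒮, h𝒮.1, h𝒮.2, fun s hs hne hdisj => ?_⟩
  rw [disjoint_biUnion_right] at hdisj
  have hs𝒮 : s ∉ 𝒮 := fun hs𝒮 => hne.ne_empty (disjoint_self.1 (hdisj s hs𝒮))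
  have hins : insert s 𝒮 ∈ D := by
    rw [mem_filter, mem_powerset, coe_insert]
    exact ⟨insert_subset hs h𝒮.1, h𝒮.2.insert fun t ht _ => hdisj t ht⟩
  have := hmax _ hins
  rw [card_insert_of_notMem hs𝒮] at this
  omega

variable [Fintype α]

theorem card_filter_mem_powersetCard_succ (x : α) (k : ℕ) :
    #{s ∈ powersetCard (k + 1) univ | x ∈ s} = (Fintype.card α - 1).choose k := by
  rw [← card_univ, ← card_erase_of_mem (mem_univ x), ← card_powersetCard]
  refine card_nbij' (·.erase x) (insert x) ?_ ?_ ?_ ?_ <;> intro s hs <;>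
    simp only [mem_coe, mem_filter, mem_powersetCard] at hs ⊢
  · exact ⟨erase_subset_erase x (subset_univ s), by rw [card_erase_of_mem hs.2, hs.1.2]; rfl⟩
  · have hx : x ∉ s := fun hx => notMem_erase x univ (hs.1 hx)
    exact ⟨⟨subset_univ _, by rw [card_insert_of_notMem hx, hs.2]⟩, mem_insert_self x s⟩
  · exact insert_erase hs.2
  · exact erase_insert fun hx => notMem_erase x univ (hs.1 hx)

theorem card_mul_card_filter_mem_powersetCard (x : α) (d : ℕ) :
    Fintype.card α * #{s ∈ powersetCard d univ | x ∈ s} = d * (Fintype.card α).choose d := by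
  cases d with
  | zero => simp
  | succ k =>
    obtain ⟨n, hn⟩ : ∃ n, Fintype.card α = n + 1 :=
      Nat.exists_eq_succ_of_ne_zero (Fintype.card_pos_iff.2 ⟨x⟩).ne'
    rw [card_filter_mem_powersetCard_succ, hn, Nat.add_sub_cancel, Nat.add_one_mul_choose_eq,
      mul_comm]

theorem card_mul_card_le_of_forall_not_disjoint {G : Finset (Finset α)} {U : Finset α} {d : ℕ}
    (hG : G ⊆ powersetCard d univ) (hU : ∀ s ∈ G, ¬Disjoint s U) :
    Fintype.card α * #G ≤ #U * (d * (Fintype.card α).choose d) := by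
  have hcover : G ⊆ U.biUnion fun x => {s ∈ powersetCard d univ | x ∈ s} := by
    intro s hs
    obtain ⟨x, hxs, hxU⟩ := not_disjoint_iff.1 (hU s hs)
    exact mem_biUnion.2 ⟨x, hxU, mem_filter.2 ⟨hG hs, hxs⟩⟩
  calc Fintype.card α * #G
      ≤ Fintype.card α * ∑ x ∈ U, #{s ∈ powersetCard d univ | x ∈ s} :=
        Nat.mul_le_mul_left _ ((card_le_card hcover).trans card_biUnion_le)
    _ = #U * (d * (Fintype.card α).choose d) := by
        rw [mul_sum, sum_congr rfl fun x _ => card_mul_card_filter_mem_powersetCard x d, sum_const,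
          smul_eq_mul]

end Finset

open scoped Classical in
theorem stmt1_general (F : Type*) [RCLike F] (n d m : ℕ) (hd : 1 ≤ d)
    (A : Matrix (Fin d) (Fin n) F)
    (h : ∀ 𝒮 : Finset (Finset (Fin n)),
        (∀ s ∈ 𝒮, s.card = d ∧
          LinearIndependent F (fun j : {x // x ∈ s} => fun i : Fin d => A i j.1)) →
        (𝒮 : Set (Finset (Fin n))).Pairwise (fun s t => Disjoint s t) →
        𝒮.card ≤ m) :
    ((((Finset.univ : Finset (Fin n)).powersetCard d).filter
        (fun s => LinearIndependent F (fun j : {x // x ∈ s} => fun i : Fin d => A i j.1))).card : ℝ)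
      ≤ ((m * d ^ 2 : ℝ) / n) * (n.choose d) := by
  set G := ((univ : Finset (Fin n)).powersetCard d).filter
    fun s => LinearIndependent F fun j : {x // x ∈ s} => fun i : Fin d => A i j.1
  have hGd : G ⊆ powersetCard d univ := filter_subset _ _
  have hne : ∀ s ∈ G, s.Nonempty := fun s hs =>
    card_pos.1 (by rw [(mem_powersetCard.1 (hGd hs)).2]; omega)
  obtain ⟨𝒮, h𝒮G, h𝒮disj, hhit⟩ := exists_pairwiseDisjoint_subset_not_disjoint_biUnion G
  have h𝒮m : #𝒮 ≤ m := h 𝒮 (fun s hs =>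
    ⟨(mem_powersetCard.1 (hGd (h𝒮G hs))).2, (mem_filter.1 (h𝒮G hs)).2⟩) h𝒮disj
  have hU : #(𝒮.biUnion id) ≤ m * d :=
    (card_biUnion_le_card_mul _ _ _ fun s hs => (mem_powersetCard.1 (hGd (h𝒮G hs))).2.le).trans
      (Nat.mul_le_mul_right d h𝒮m)
  have hcount := card_mul_card_le_of_forall_not_disjoint hGd fun s hs => hhit s hs (hne s hs)
  rw [Fintype.card_fin] at hcount
  rcases G.eq_empty_or_nonempty with hG | ⟨s, hs⟩
  · rw [hG, card_empty, Nat.cast_zero]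
    positivity
  obtain ⟨x, -⟩ := hne s hs
  rw [div_mul_eq_mul_div, le_div_iff₀ (by exact_mod_cast x.pos), mul_comm]
  exact_mod_cast calc n * #G
      ≤ #(𝒮.biUnion id) * (d * n.choose d) := hcount
    _ ≤ m * d * (d * n.choose d) := Nat.mul_le_mul_right _ hU
    _ = m * d ^ 2 * n.choose d := by ring

open scoped Classical in
/-- Let `n ≥ d ≥ 1`, `m ≥ 1`, and let `F ∈ {ℝ, ℂ}` (formalised via `RCLike`).
If a matrix `A ∈ F^{d×n}` does not contain more than `m` pairwise column-disjoint nonsingular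
`d×d` submatrices (a `d×d` submatrix is given by a `d`-element set of columns, and it is
nonsingular iff those columns are linearly independent), then at most an `(md²/n)`-fraction
of the `d×d` submatrices of `A` are nonsingular. -/
theorem stmt1 (F : Type*) [RCLike F] (n d m : ℕ) (hd : 1 ≤ d) (hdn : d ≤ n) (hm : 1 ≤ m)
    (A : Matrix (Fin d) (Fin n) F)
    (h : ∀ 𝒮 : Finset (Finset (Fin n)),
        (∀ s ∈ 𝒮, s.card = d ∧
          LinearIndependent F (fun j : {x // x ∈ s} => fun i : Fin d => A i j.1)) →
        (𝒮 : Set (Finset (Fin n))).Pairwise (fun s t => Disjoint s t) →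
        𝒮.card ≤ m) :
    ((((Finset.univ : Finset (Fin n)).powersetCard d).filter
        (fun s => LinearIndependent F (fun j : {x // x ∈ s} => fun i : Fin d => A i j.1))).card : ℝ)
      ≤ ((m * d ^ 2 : ℝ) / n) * (n.choose d) :=
  stmt1_general F n d m hd A h
end

section
/- Let F ∈ {ℝ, ℂ}, let A ∈ F^{n×n} be a matrix such that at least an ε-fraction of its r×r submatrices are nonsingular. Then for any k ≤ r, at least an (ε / binom(r,k))-fraction of the k×k submatrices of A are nonsingular. -/
/-!
Double counting. If the `r × r` submatrix of `A` on rows `S` and columns `T` is nonsingular,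
its rows are independent, hence so are those indexed by any `k`-subset `S' ⊆ S`; the
`S' × T` submatrix then has column rank `k`, so some `k` columns `T' ⊆ T` give a nonsingular
`k × k` submatrix. Thus every nonsingular `r × r` submatrix contains at least `binom(r,k)`
nonsingular `k × k` ones, while every `k × k` submatrix lies in at most `binom(n-k,r-k)²`
submatrices of size `r × r`. With `binom(n,r) binom(r,k) = binom(n,k) binom(n-k,r-k)` this
gives the bound.
-/

open Finset Module Submodule

theorem Matrix.linearIndependent_row_of_rank_eq_card {K m n : Type*} [Field K] [Fintype m]
    [Fintype n] {M : Matrix m n K} (h : M.rank = Fintype.card m) : LinearIndependent K M.row := by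
  rw [linearIndependent_iff_card_eq_finrank_span, Set.finrank, ← M.rank_eq_finrank_span_row, h]

theorem exists_subset_linearIndepOn_card_eq_finrank_span {K V ι : Type*} [Field K]
    [AddCommGroup V] [Module K V] (v : ι → V) (T : Finset ι) :
    ∃ T' ⊆ T, #T' = finrank K (span K (v '' T)) ∧ LinearIndepOn K v (T' : Set ι) := by
  obtain ⟨b, hbT, -, hspan, hli⟩ :=
    exists_linearIndepOn_extension (linearIndepOn_empty K v) (Set.empty_subset (T : Set ι))
  lift b to Finset ι using T.finite_toSet.subset hbT
  refine ⟨b, mod_cast hbT, ?_, hli⟩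
  have : span K (v '' T) = span K (v '' b) :=
    le_antisymm (span_le.2 hspan) (span_mono (Set.image_mono hbT))
  rw [this, Set.image_eq_range, finrank_span_eq_card hli]; simp

namespace Matrix

variable {K m n : Type*} [Field K]

theorem exists_subset_rank_submatrix_eq_card (A : Matrix m n K) {S : Finset m} {T : Finset n}
    (hST : (A.submatrix ((↑) : S → m) ((↑) : T → n)).rank = #S) {S' : Finset m} (hS' : S' ⊆ S) :
    ∃ T' ⊆ T, #T' = #S' ∧ (A.submatrix ((↑) : S' → m) ((↑) : T' → n)).rank = #S' := by
  have hrows : LinearIndependent K (A.submatrix ((↑) : S' → m) ((↑) : T → n)).row :=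
    (linearIndependent_row_of_rank_eq_card (hST.trans (Fintype.card_coe S).symm)).comp
      (fun i : S' => ⟨i, hS' i.2⟩) fun _ _ h => Subtype.ext (congrArg (fun i : S => (i : m)) h)
  have hrank : (A.submatrix ((↑) : S' → m) ((↑) : T → n)).rank = #S' := by
    simpa using hrows.rank_matrix
  obtain ⟨T', hT'T, hcard, hli⟩ :=
    exists_subset_linearIndepOn_card_eq_finrank_span (K := K) (fun j (i : S') => A i j) T
  have hspan : finrank K (span K ((fun j (i : S') => A i j) '' T)) = #S' := by
    rw [← hrank, rank_eq_finrank_span_cols, Set.image_eq_range]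
    rfl
  refine ⟨T', hT'T, hcard.trans hspan, ?_⟩
  have hcols : LinearIndependent K (A.submatrix ((↑) : S' → m) ((↑) : T' → n))ᵀ.row := hli
  rw [← rank_transpose, hcols.rank_matrix, Fintype.card_coe, hcard, hspan]

noncomputable def fullRankSubmatrices [Fintype m] [Fintype n] (A : Matrix m n K) (k : ℕ) :
    Finset (Finset m × Finset n) :=
  (univ.powersetCard k ×ˢ univ.powersetCard k).filter
    fun st => (A.submatrix ((↑) : st.1 → m) ((↑) : st.2 → n)).rank = k

variable [Fintype m] [Fintype n] {A : Matrix m n K} {k : ℕ}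

theorem mem_fullRankSubmatrices {st : Finset m × Finset n} :
    st ∈ A.fullRankSubmatrices k ↔
      #st.1 = k ∧ #st.2 = k ∧ (A.submatrix ((↑) : st.1 → m) ((↑) : st.2 → n)).rank = k := by
  simp [fullRankSubmatrices, and_assoc]

theorem card_fullRankSubmatrices_mul_choose_le (A : Matrix m n K) {r : ℕ} (hk : k ≤ r) :
    #(A.fullRankSubmatrices r) * r.choose k ≤
      #(A.fullRankSubmatrices k) *
        ((Fintype.card m - k).choose (r - k) * (Fintype.card n - k).choose (r - k)) := by
  classical
  refine card_mul_le_card_mul (fun st st' => st'.1 ⊆ st.1 ∧ st'.2 ⊆ st.2) ?_ ?_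
  · rintro ⟨S, T⟩ hST
    obtain ⟨hS, -, hrank⟩ := mem_fullRankSubmatrices.1 hST
    calc r.choose k = #(S.powersetCard k) := by rw [card_powersetCard, hS]
      _ ≤ _ := card_le_card_of_surjOn Prod.fst ?_
    intro S' hS'
    obtain ⟨hS'S, hS'k⟩ := mem_powersetCard.1 hS'
    obtain ⟨T', hT'T, hT'k, hrank'⟩ :=
      A.exists_subset_rank_submatrix_eq_card (hrank.trans hS.symm) hS'S
    refine ⟨(S', T'), ?_, rfl⟩
    simp only [coe_bipartiteAbove, Set.mem_ofPred_eq, mem_fullRankSubmatrices]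
    exact ⟨⟨hS'k, hT'k.trans hS'k, hrank'.trans hS'k⟩, hS'S, hT'T⟩
  · rintro ⟨S', T'⟩ hST'
    obtain ⟨hS', hT', -⟩ := mem_fullRankSubmatrices.1 hST'
    calc _ ≤ #((univ.powersetCard r).filter (S' ⊆ ·) ×ˢ
              (univ.powersetCard r).filter (T' ⊆ ·)) := by
          refine card_le_card fun st hst => ?_
          obtain ⟨hst, hS'S, hT'T⟩ := (mem_bipartiteBelow _).1 hst
          obtain ⟨hS, hT, -⟩ := mem_fullRankSubmatrices.1 hst
          simp [hS, hT, hS'S, hT'T]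
      _ = _ := by
          rw [card_product, card_filter_powersetCard_subset _ _ _ (subset_univ _) (hS'.trans_le hk),
            card_filter_powersetCard_subset _ _ _ (subset_univ _) (hT'.trans_le hk)]
          simp [hS', hT']

end Matrix

open scoped Classical in
theorem stmt2_general (F : Type*) [RCLike F] (n r k : ℕ) (hrn : r ≤ n) (hk : k ≤ r)
    (ε : ℝ) (A : Matrix (Fin n) (Fin n) F)
    (h : ε * (n.choose r) ^ 2 ≤
      ((((Finset.univ : Finset (Fin n)).powersetCard r ×ˢ
          (Finset.univ : Finset (Fin n)).powersetCard r).filter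
        (fun st => (A.submatrix (fun i : {x // x ∈ st.1} => i.1)
            (fun j : {x // x ∈ st.2} => j.1)).rank = r)).card : ℝ)) :
    (ε / (r.choose k)) * (n.choose k) ^ 2 ≤
      ((((Finset.univ : Finset (Fin n)).powersetCard k ×ˢ
          (Finset.univ : Finset (Fin n)).powersetCard k).filter
        (fun st => (A.submatrix (fun i : {x // x ∈ st.1} => i.1)
            (fun j : {x // x ∈ st.2} => j.1)).rank = k)).card : ℝ) := by
  have hcount := A.card_fullRankSubmatrices_mul_choose_le hk
  simp only [Fintype.card_fin, ← sq] at hcount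
  change ε * _ ≤ (#(A.fullRankSubmatrices r) : ℝ) at h
  change _ ≤ (#(A.fullRankSubmatrices k) : ℝ)
  have hc : (0 : ℝ) < r.choose k := mod_cast Nat.choose_pos hk
  have hd : (0 : ℝ) < (n - k).choose (r - k) :=
    mod_cast Nat.choose_pos (Nat.sub_le_sub_right hrn k)
  have hchoose : (n.choose r : ℝ) * r.choose k = n.choose k * (n - k).choose (r - k) :=
    mod_cast Nat.choose_mul hk
  rw [div_mul_eq_mul_div, div_le_iff₀ hc]
  refine le_of_mul_le_mul_right ?_ (pow_pos hd 2)
  calc ε * n.choose k ^ 2 * ((n - k).choose (r - k) : ℝ) ^ 2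
      = ε * n.choose r ^ 2 * r.choose k * r.choose k := by
        rw [mul_assoc, ← mul_pow, ← hchoose]; ring
    _ ≤ (#(A.fullRankSubmatrices r) : ℝ) * r.choose k * r.choose k := by gcongr
    _ ≤ (#(A.fullRankSubmatrices k) : ℝ) * ((n - k).choose (r - k) : ℝ) ^ 2 * r.choose k :=
        mul_le_mul_of_nonneg_right (mod_cast hcount) hc.le
    _ = _ := by ring

open scoped Classical in
/-- Let `F ∈ {ℝ, ℂ}` (formalised via `RCLike`), and let `A ∈ F^{n×n}` be a
matrix such that at least an `ε`-fraction of its `r×r` submatrices (given by a choice of `r`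
rows and `r` columns, out of `binom(n,r)²` total choices) are nonsingular (i.e. have full
rank `r`). Then for any `k ≤ r`, at least an `(ε / binom(r,k))`-fraction of the `k×k`
submatrices of `A` are nonsingular. -/
theorem stmt2 (F : Type*) [RCLike F] (n r k : ℕ) (hr : 1 ≤ r) (hrn : r ≤ n) (hk : k ≤ r)
    (ε : ℝ) (A : Matrix (Fin n) (Fin n) F)
    (h : ε * (n.choose r) ^ 2 ≤
      ((((Finset.univ : Finset (Fin n)).powersetCard r ×ˢ
          (Finset.univ : Finset (Fin n)).powersetCard r).filter
        (fun st => (A.submatrix (fun i : {x // x ∈ st.1} => i.1)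
            (fun j : {x // x ∈ st.2} => j.1)).rank = r)).card : ℝ)) :
    (ε / (r.choose k)) * (n.choose k) ^ 2 ≤
      ((((Finset.univ : Finset (Fin n)).powersetCard k ×ˢ
          (Finset.univ : Finset (Fin n)).powersetCard k).filter
        (fun st => (A.submatrix (fun i : {x // x ∈ st.1} => i.1)
            (fun j : {x // x ∈ st.2} => j.1)).rank = k)).card : ℝ) :=
  stmt2_general F n r k hrn hk ε A h
end

section
/- Let F ∈ {ℝ, ℂ} and let A, B ∈ F^{n×n}. If B has rank less than r and the number of entries where A and B differ is at most εn², then the number of nonsingular r×r submatrices of A is at most r²ε · binom(n,r)². -/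
/-!
A nonsingular `r × r` submatrix of `A` cannot coincide with the corresponding submatrix of `B`,
whose rank is at most `rank B < r`; so it contains one of the at most `εn²` entries where `A`
and `B` differ. A fixed entry lies in `C(n-1, r-1)²` of the `r × r` submatrices, and
`n · C(n-1, r-1) = r · C(n, r)`.
-/

open Finset

theorem Nat.mul_choose_sub_one_sub_one (n : ℕ) {k : ℕ} (hk : 1 ≤ k) :
    n * (n - 1).choose (k - 1) = n.choose k * k := by
  obtain ⟨k, rfl⟩ := Nat.exists_eq_add_of_le' hk
  cases n with
  | zero => simp
  | succ n => simpa using Nat.add_one_mul_choose_eq n k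

theorem Matrix.exists_ne_of_rank_lt_rank_submatrix {K m n m₀ n₀ : Type*} [Field K]
    [Fintype n] [Fintype n₀] (A B : Matrix m n K) (f : m₀ → m) (g : n₀ → n)
    (h : B.rank < (A.submatrix f g).rank) : ∃ i j, A (f i) (g j) ≠ B (f i) (g j) := by
  by_contra! hAB
  have hsub : A.submatrix f g = B.submatrix f g := Matrix.ext hAB
  exact (B.rank_submatrix_le f g).not_gt (hsub ▸ h)

theorem Finset.card_filter_mem_powersetCard_univ {α : Type*} [Fintype α] [DecidableEq α]
    (a : α) {r : ℕ} (hr : 1 ≤ r) :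
    #{s ∈ (univ : Finset α).powersetCard r | a ∈ s} = (Fintype.card α - 1).choose (r - 1) := by
  simpa using card_filter_powersetCard_subset {a} univ r (subset_univ _) (by simpa using hr)

open scoped Classical in
theorem Matrix.card_filter_rank_submatrix_eq_le {K m n : Type*} [Field K] [Fintype m]
    [Fintype n] (A B : Matrix m n K) {r : ℕ} (hB : B.rank < r) :
    #{st ∈ (univ : Finset m).powersetCard r ×ˢ (univ : Finset n).powersetCard r |
        (A.submatrix (fun i : {x // x ∈ st.1} => i.1) (fun j : {x // x ∈ st.2} => j.1)).rank = r}
      ≤ #{p : m × n | A p.1 p.2 ≠ B p.1 p.2} *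
        ((Fintype.card m - 1).choose (r - 1) * (Fintype.card n - 1).choose (r - 1)) := by
  set S := (univ : Finset m).powersetCard r ×ˢ (univ : Finset n).powersetCard r
  set D := ({p : m × n | A p.1 p.2 ≠ B p.1 p.2} : Finset (m × n))
  have hr : 1 ≤ r := by omega
  have hcover : {st ∈ S | (A.submatrix (fun i : {x // x ∈ st.1} => i.1)
      (fun j : {x // x ∈ st.2} => j.1)).rank = r} ⊆
      D.biUnion fun p => {st ∈ S | p.1 ∈ st.1 ∧ p.2 ∈ st.2} := by
    intro st hst
    rw [mem_filter] at hst
    obtain ⟨i, j, hij⟩ := A.exists_ne_of_rank_lt_rank_submatrix B _ _ (hst.2 ▸ hB)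
    exact mem_biUnion.2 ⟨(i.1, j.1), by simpa [D] using hij, mem_filter.2 ⟨hst.1, i.2, j.2⟩⟩
  have hcontaining (p : m × n) : #{st ∈ S | p.1 ∈ st.1 ∧ p.2 ∈ st.2} =
      (Fintype.card m - 1).choose (r - 1) * (Fintype.card n - 1).choose (r - 1) := by
    rw [filter_product (fun s => p.1 ∈ s) (fun t => p.2 ∈ t), card_product,
      card_filter_mem_powersetCard_univ _ hr, card_filter_mem_powersetCard_univ _ hr]
  calc _ ≤ #(D.biUnion fun p => {st ∈ S | p.1 ∈ st.1 ∧ p.2 ∈ st.2}) := card_le_card hcover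
    _ ≤ ∑ p ∈ D, #{st ∈ S | p.1 ∈ st.1 ∧ p.2 ∈ st.2} := card_biUnion_le
    _ = _ := by rw [sum_congr rfl fun p _ => hcontaining p, sum_const, smul_eq_mul]

open scoped Classical in
theorem stmt3_general (F : Type*) [RCLike F] (n r : ℕ) (ε : ℝ)
    (A B : Matrix (Fin n) (Fin n) F)
    (hB : B.rank < r)
    (hdiff : (((Finset.univ : Finset (Fin n × Fin n)).filter
        (fun p => A p.1 p.2 ≠ B p.1 p.2)).card : ℝ) ≤ ε * n ^ 2) :
    ((((Finset.univ : Finset (Fin n)).powersetCard r ×ˢ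
        (Finset.univ : Finset (Fin n)).powersetCard r).filter
      (fun st => (A.submatrix (fun i : {x // x ∈ st.1} => i.1)
          (fun j : {x // x ∈ st.2} => j.1)).rank = r)).card : ℝ)
      ≤ r ^ 2 * ε * (n.choose r) ^ 2 := by
  have hcount := A.card_filter_rank_submatrix_eq_le B hB
  rw [Fintype.card_fin, ← sq] at hcount
  have hchoose : (n : ℝ) * (n - 1).choose (r - 1) = n.choose r * r := by
    exact_mod_cast Nat.mul_choose_sub_one_sub_one n (by omega : 1 ≤ r)
  calc _ ≤ (#{p : Fin n × Fin n | A p.1 p.2 ≠ B p.1 p.2} : ℝ) *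
          ((n - 1).choose (r - 1)) ^ 2 := by exact_mod_cast hcount
    _ ≤ ε * n ^ 2 * ((n - 1).choose (r - 1)) ^ 2 := by gcongr
    _ = ε * (n * (n - 1).choose (r - 1)) ^ 2 := by ring
    _ = r ^ 2 * ε * (n.choose r) ^ 2 := by rw [hchoose]; ring

open scoped Classical in
/-- Let `F ∈ {ℝ, ℂ}` (formalised via `RCLike`) and `A, B ∈ F^{n×n}`.
If `B` has rank less than `r` and the number of entries where `A` and `B` differ is at most
`εn²`, then the number of nonsingular `r×r` submatrices of `A` (given by a choice of `r` rows
and `r` columns; nonsingular means full rank `r`) is at most `r²ε · binom(n,r)²`. -/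
theorem stmt3 (F : Type*) [RCLike F] (n r : ℕ) (hr : 1 ≤ r) (hrn : r ≤ n) (ε : ℝ)
    (A B : Matrix (Fin n) (Fin n) F)
    (hB : B.rank < r)
    (hdiff : (((Finset.univ : Finset (Fin n × Fin n)).filter
        (fun p => A p.1 p.2 ≠ B p.1 p.2)).card : ℝ) ≤ ε * n ^ 2) :
    ((((Finset.univ : Finset (Fin n)).powersetCard r ×ˢ
        (Finset.univ : Finset (Fin n)).powersetCard r).filter
      (fun st => (A.submatrix (fun i : {x // x ∈ st.1} => i.1)
          (fun j : {x // x ∈ st.2} => j.1)).rank = r)).card : ℝ)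
      ≤ r ^ 2 * ε * (n.choose r) ^ 2 :=
  stmt3_general F n r ε A B hB hdiff
end

section
/- Let E and F be independent random variables, let 𝓔(E,F) be an event depending on them, and let k ∈ ℕ. If E₀, E₁, ..., E_k are independent copies of E (all independent of F), then Pr[𝓔(E,F)] ≤ (Pr[𝓔(E₀,F) ∩ 𝓔(E₁,F) ∩ ... ∩ 𝓔(E_k,F)])^{1/(k+1)}. -/
open MeasureTheory ProbabilityTheory
open scoped ENNReal

/-!
Write `g y = Pr[(E, y) ∈ 𝓔]`. Since `E` and `Y` are independent,
`Pr[𝓔(E,Y)] = 𝔼[g(Y)]`; since the copies are i.i.d. and jointly independent of `Y`, the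
conditional probability that all of them succeed given `Y = y` is `g y ^ (k+1)`, so
`Pr[⋂ᵢ 𝓔(Eᵢ,Y)] = 𝔼[g(Y)^(k+1)]`. Jensen's inequality, in the form `‖g‖₁ ≤ ‖g‖_{k+1}` on a
probability space, concludes.
-/

namespace MeasureTheory

theorem lintegral_le_lintegral_pow_rpow {β : Type*} [MeasurableSpace β] {ν : Measure β}
    [IsProbabilityMeasure ν] {f : β → ℝ≥0∞} (hf : AEMeasurable f ν) {n : ℕ} (hn : n ≠ 0) :
    ∫⁻ y, f y ∂ν ≤ (∫⁻ y, f y ^ n ∂ν) ^ ((1 : ℝ) / n) := by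
  have h := eLpNorm'_le_eLpNorm'_of_exponent_le zero_lt_one
    (show (1 : ℝ) ≤ n by exact_mod_cast Nat.one_le_iff_ne_zero.mpr hn) ν hf.aestronglyMeasurable
  simpa [eLpNorm', enorm_eq_self] using h

theorem measurableSet_setOf_forall_mem {α β ι : Type*} [MeasurableSpace α] [MeasurableSpace β]
    [Countable ι] {s : Set (α × β)} (hs : MeasurableSet s) :
    MeasurableSet {p : (ι → α) × β | ∀ i, (p.1 i, p.2) ∈ s} := by
  simp only [Set.ofPred_forall]
  exact .iInter fun i => (((measurable_pi_apply i).comp measurable_fst).prodMk measurable_snd) hs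

theorem Measure.pi_prod_setOf_forall_mem {α β ι : Type*} [MeasurableSpace α] [MeasurableSpace β]
    [Fintype ι] (ρ : Measure α) [SigmaFinite ρ] (ν : Measure β) [SFinite ν] {s : Set (α × β)}
    (hs : MeasurableSet s) :
    ((Measure.pi fun _ : ι => ρ).prod ν) {p | ∀ i, (p.1 i, p.2) ∈ s} =
      ∫⁻ y, ρ ((·, y) ⁻¹' s) ^ Fintype.card ι ∂ν := by
  rw [Measure.prod_apply_symm (measurableSet_setOf_forall_mem hs)]
  refine lintegral_congr fun y => ?_
  have : (·, y) ⁻¹' {p : (ι → α) × β | ∀ i, (p.1 i, p.2) ∈ s} =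
      Set.univ.pi fun _ => (·, y) ⁻¹' s := by
    ext v; simp
  rw [this, Measure.pi_pi, Finset.prod_const, Finset.card_univ]

end MeasureTheory

namespace ProbabilityTheory

theorem iIndepFun.map_pi_some_prodMk_none {Ω ι : Type*} [MeasurableSpace Ω] {μ : Measure Ω}
    [Fintype ι] {β : Option ι → Type*} {m : ∀ o, MeasurableSpace (β o)} {f : ∀ o, Ω → β o}
    (hf : ∀ o, Measurable (f o)) (h : iIndepFun f μ) :
    μ.map (fun ω => (fun i => f (some i) ω, f none ω)) =
      (Measure.pi fun i => μ.map (f (some i))).prod (μ.map (f none)) := by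
  have := h.isProbabilityMeasure
  have hpi := h.map_fun_eq_pi_map fun o => (hf o).aemeasurable
  rw [← Measure.pi_map_piOptionEquivProd] at hpi
  rw [← (MeasurableEquiv.piOptionEquivProd β).map_map_symm
    (ν := (Measure.pi fun i => μ.map (f (some i))).prod (μ.map (f none))), ← hpi,
    Measure.map_map (MeasurableEquiv.measurable _) (measurable_pi_lambda _ hf)]
  rfl

end ProbabilityTheory

/-- **decoupling with multiple copies.** Let `E` and `Y` (called `F` in the
paper) be independent random variables, `𝓔` a measurable event depending on them, and
`k ∈ ℕ`. If `E₀,...,E_k` are independent copies of `E`, all of them (together with `Y`)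
jointly independent, then
`Pr[𝓔(E,Y)] ≤ Pr[𝓔(E₀,Y) ∩ ... ∩ 𝓔(E_k,Y)]^{1/(k+1)}`.
The joint independence of `(Y, E₀, ..., E_k)` is encoded by `iIndepFun` over the index type
`Option (Fin (k+1))`, where `none` indexes `Y` and `some i` indexes `Eᵢ`. -/
theorem stmt4 {Ω : Type*} {α β : Type u} [MeasurableSpace Ω]
    [mα : MeasurableSpace α] [mβ : MeasurableSpace β]
    (μ : Measure Ω) [IsProbabilityMeasure μ] (k : ℕ)
    (E : Ω → α) (Y : Ω → β) (Ec : Fin (k + 1) → Ω → α)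
    (hE : Measurable E) (hY : Measurable Y) (hEc : ∀ i, Measurable (Ec i))
    (𝓔 : Set (α × β)) (h𝓔 : MeasurableSet 𝓔)
    (hEY : IndepFun E Y μ)
    (hdist : ∀ i, Measure.map (Ec i) μ = Measure.map E μ)
    (hjoint : iIndepFun
      (m := fun o : Option (Fin (k + 1)) =>
        Option.rec (motive := fun o => MeasurableSpace (Option.rec β (fun _ => α) o))
          mβ (fun _ => mα) o)
      (fun o : Option (Fin (k + 1)) =>
        Option.rec (motive := fun o => Ω → Option.rec β (fun _ => α) o)
          Y (fun i => Ec i) o) μ) :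
    (μ {ω | (E ω, Y ω) ∈ 𝓔}).toReal ≤
      (μ {ω | ∀ i, (Ec i ω, Y ω) ∈ 𝓔}).toReal ^ ((1 : ℝ) / (k + 1)) := by
  set ρ := μ.map E
  set ν := μ.map Y
  have : IsProbabilityMeasure ρ := Measure.isProbabilityMeasure_map hE.aemeasurable
  have : IsProbabilityMeasure ν := Measure.isProbabilityMeasure_map hY.aemeasurable
  have h_one : μ {ω | (E ω, Y ω) ∈ 𝓔} = ∫⁻ y, ρ ((·, y) ⁻¹' 𝓔) ∂ν := by
    rw [← Measure.prod_apply_symm h𝓔,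
      ← (indepFun_iff_map_prod_eq_prod_map_map hE.aemeasurable hY.aemeasurable).mp hEY,
      Measure.map_apply (hE.prodMk hY) h𝓔]
    rfl
  have h_copies : μ {ω | ∀ i, (Ec i ω, Y ω) ∈ 𝓔} = ∫⁻ y, ρ ((·, y) ⁻¹' 𝓔) ^ (k + 1) ∂ν := by
    have h_law : μ.map (fun ω => (fun i => Ec i ω, Y ω)) = (Measure.pi fun _ => ρ).prod ν := by
      have := hjoint.map_pi_some_prodMk_none (by rintro (_ | i); exacts [hY, hEc i])
      simpa only [hdist] using this
    have h_slice := Measure.pi_prod_setOf_forall_mem (ι := Fin (k + 1)) ρ ν h𝓔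
    rwa [Fintype.card_fin, ← h_law, Measure.map_apply (measurable_pi_lambda _ hEc |>.prodMk hY)
      (measurableSet_setOf_forall_mem h𝓔)] at h_slice
  have h_jensen := lintegral_le_lintegral_pow_rpow (ν := ν)
    (measurable_measure_prodMk_right (μ := ρ) h𝓔).aemeasurable k.succ_ne_zero
  rw [← h_one, ← h_copies, Nat.cast_succ] at h_jensen
  rw [ENNReal.toReal_rpow]
  exact ENNReal.toReal_mono (ENNReal.rpow_ne_top_of_nonneg (by positivity) (measure_ne_top _ _))
    h_jensen
end

section
/- Let s₁, s₂, t₁, t₂ ∈ ℕ^r be vectors with s₁ + s₂ = t₁ + t₂ = v. If (s₁, s₂) ≠ (t₁, t₂), then the decreasing rearrangement of s₁ + t₂ is strictly greater than the decreasing rearrangement of v in lexicographic order, or the decreasing rearrangement of t₁ + s₂ is strictly greater than the decreasing rearrangement of v in lexicographic order. -/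
/-! Put `a = s₁ + t₂` and `b = t₁ + s₂`, so that `a + b = v + v` and `a ≠ v`. Wherever
`a i ≠ v i`, the value `v i` lies strictly between `a i` and `b i`. Let `x` be the largest of the
values `a i`, `b i` over such indices. Above level `x` the three vectors have the same superlevel
sets, while at level `x` the superlevel set of `v` is strictly contained in that of `a` or of `b`.
For decreasing vectors, the first level (from the top) at which the numbers of entries `≥ y`
differ decides the lexicographic order. -/

/-- The decreasing rearrangement `w↓` of a vector `w ∈ ℕ^r`: sort the entries of `w` in
decreasing order. (`Tuple.sort` sorts increasingly, so we reverse the index.) -/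
def decRearrange {r : ℕ} (w : Fin r → ℕ) : Fin r → ℕ :=
  fun i => (w ∘ Tuple.sort w) i.rev

open Finset

section Superlevel

variable {ι α : Type*} [Fintype ι] [LinearOrder α]

def superlevel (w : ι → α) (x : α) : Finset ι := {i | x ≤ w i}

@[simp]
lemma mem_superlevel {w : ι → α} {x : α} {i : ι} : i ∈ superlevel w x ↔ x ≤ w i := by
  simp [superlevel]

lemma card_superlevel_comp_equiv {κ : Type*} [Fintype κ] (w : ι → α) (σ : κ ≃ ι)
    (x : α) :
    #(superlevel (w ∘ σ) x) = #(superlevel w x) :=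
  card_equiv σ fun _ => by simp

lemma Antitone.lt_card_superlevel_iff {r : ℕ} {p : Fin r → α} (hp : Antitone p) {x : α}
    {j : Fin r} : (j : ℕ) < #(superlevel p x) ↔ x ≤ p j := by
  constructor
  · intro hj
    by_contra hpj
    have hsub : superlevel p x ⊆ Iio j := fun i hi => by
      rw [mem_superlevel] at hi
      exact mem_Iio.2 (lt_of_not_ge fun hji => hpj (hi.trans (hp hji)))
    have := card_le_card hsub
    rw [Fin.card_Iio] at this
    omega
  · intro hpj
    have hsub : Iic j ⊆ superlevel p x := fun i hi =>
      mem_superlevel.2 (hpj.trans (hp (mem_Iic.1 hi)))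
    have := card_le_card hsub
    rw [Fin.card_Iic] at this
    omega

lemma toLex_lt_of_card_superlevel_lt {r : ℕ} {p q : Fin r → α} (hp : Antitone p)
    (hq : Antitone q) (x : α) (habove : ∀ y, x < y → #(superlevel p y) = #(superlevel q y))
    (hx : #(superlevel p x) < #(superlevel q x)) : toLex p < toLex q := by
  have hkr : #(superlevel p x) < r :=
    hx.trans_le ((card_le_univ _).trans_eq (Fintype.card_fin r))
  let k : Fin r := ⟨_, hkr⟩
  have hpk : p k < x := lt_of_not_ge fun h => (lt_irrefl k.1) (hp.lt_card_superlevel_iff.2 h)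
  have hqk : x ≤ q k := hq.lt_card_superlevel_iff.1 hx
  suffices hagree : ∀ j < k, p j = q j from ⟨k, hagree, hpk.trans_le hqk⟩
  intro j hj
  have hpj : x ≤ p j := hp.lt_card_superlevel_iff.1 hj
  have hqj : x ≤ q j := hq.lt_card_superlevel_iff.1 ((show (j : ℕ) < _ from hj).trans hx)
  refine le_antisymm (le_of_not_gt fun h => ?_) (le_of_not_gt fun h => ?_)
  · have hj' := hp.lt_card_superlevel_iff.2 (le_refl (p j))
    rw [habove _ (hqj.trans_lt h)] at hj'
    exact h.not_ge (hq.lt_card_superlevel_iff.1 hj')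
  · have hj' := hq.lt_card_superlevel_iff.2 (le_refl (q j))
    rw [← habove _ (hpj.trans_lt h)] at hj'
    exact h.not_ge (hp.lt_card_superlevel_iff.1 hj')

end Superlevel

lemma decRearrange_antitone {r : ℕ} (w : Fin r → ℕ) : Antitone (decRearrange w) :=
  fun _ _ hij => Tuple.monotone_sort w (Fin.rev_le_rev.2 hij)

lemma card_superlevel_decRearrange {r : ℕ} (w : Fin r → ℕ) (x : ℕ) :
    #(superlevel (decRearrange w) x) = #(superlevel w x) :=
  card_superlevel_comp_equiv w (Fin.revPerm.trans (Tuple.sort w)) x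

lemma toLex_decRearrange_lt_of_card_superlevel_lt {r : ℕ} {v w : Fin r → ℕ} (x : ℕ)
    (habove : ∀ y, x < y → #(superlevel v y) = #(superlevel w y))
    (hx : #(superlevel v x) < #(superlevel w x)) :
    toLex (decRearrange v) < toLex (decRearrange w) :=
  toLex_lt_of_card_superlevel_lt (decRearrange_antitone v) (decRearrange_antitone w) x
    (by simpa only [card_superlevel_decRearrange] using habove)
    (by simpa only [card_superlevel_decRearrange] using hx)

section Midpoint

variable {α : Type*} [AddCommMonoid α] [LinearOrder α] [IsOrderedCancelAddMonoid α]

lemma lt_max_of_add_eq_add_self {a b v : α} (h : a + b = v + v) (ha : a ≠ v) :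
    v < max a b := by
  rcases ha.lt_or_gt with ha | ha
  · refine lt_max_of_lt_right (lt_of_not_ge fun hb => ?_)
    exact (add_lt_add_of_lt_of_le ha hb).ne h
  · exact lt_max_of_lt_left ha

lemma exists_superlevel_ssubset_of_add_eq_add_self {ι : Type*} [Fintype ι] {a b v : ι → α}
    (h : a + b = v + v) (hne : a ≠ v) :
    ∃ x, (∀ y, x < y → superlevel a y = superlevel v y ∧ superlevel b y = superlevel v y) ∧
      (superlevel v x ⊂ superlevel a x ∨ superlevel v x ⊂ superlevel b x) := by
  have hD : ({i | a i ≠ v i} : Finset ι).Nonempty := by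
    obtain ⟨i, hi⟩ := Function.ne_iff.1 hne
    exact ⟨i, by simpa using hi⟩
  obtain ⟨i₀, hi₀, hmax⟩ := exists_max_image _ (fun i => max (a i) (b i)) hD
  set x := max (a i₀) (b i₀)
  have hi : ∀ i, a i + b i = v i + v i := fun i => congrFun h i
  have hsplit : ∀ i, (a i = v i ∧ b i = v i) ∨ (v i < x ∧ a i ≤ x ∧ b i ≤ x) := by
    intro i
    by_cases hai : a i = v i
    · exact Or.inl ⟨hai, add_left_cancel (hai ▸ hi i)⟩
    · have hle : max (a i) (b i) ≤ x := hmax i (by simpa using hai)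
      exact Or.inr ⟨(lt_max_of_add_eq_add_self (hi i) hai).trans_le hle,
        (le_max_left _ _).trans hle, (le_max_right _ _).trans hle⟩
  have hagree : ∀ i, x ≤ v i → a i = v i ∧ b i = v i := fun i hvi =>
    (hsplit i).resolve_right fun hlt => hlt.1.not_ge hvi
  have hv₀ : i₀ ∉ superlevel v x := by
    rw [mem_superlevel, not_le]
    exact lt_max_of_add_eq_add_self (hi i₀) (by simpa using hi₀)
  refine ⟨x, fun y hy => ⟨?_, ?_⟩, ?_⟩
  · ext i
    rcases hsplit i with ⟨ha, -⟩ | ⟨hv, ha, -⟩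
    · simp [ha]
    · simp [(ha.trans_lt hy).not_ge, (hv.trans hy).not_ge]
  · ext i
    rcases hsplit i with ⟨-, hb⟩ | ⟨hv, -, hb⟩
    · simp [hb]
    · simp [(hb.trans_lt hy).not_ge, (hv.trans hy).not_ge]
  · rcases max_choice (a i₀) (b i₀) with hx | hx
    · refine Or.inl ((ssubset_iff_of_subset fun i hvi => ?_).2 ⟨i₀, by simp [x, hx], hv₀⟩)
      rw [mem_superlevel] at hvi ⊢
      rwa [(hagree i hvi).1]
    · refine Or.inr ((ssubset_iff_of_subset fun i hvi => ?_).2 ⟨i₀, by simp [x, hx], hv₀⟩)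
      rw [mem_superlevel] at hvi ⊢
      rwa [(hagree i hvi).2]

end Midpoint

/-- Let `s₁, s₂, t₁, t₂ ∈ ℕ^r` with `s₁ + s₂ = t₁ + t₂ = v`. If
`(s₁, s₂) ≠ (t₁, t₂)`, then the decreasing rearrangement of `s₁ + t₂` is strictly greater
than that of `v` in lexicographic order, or the decreasing rearrangement of `t₁ + s₂` is
strictly greater than that of `v` in lexicographic order. -/
theorem stmt6 {r : ℕ} (s₁ s₂ t₁ t₂ v : Fin r → ℕ)
    (h1 : s₁ + s₂ = v) (h2 : t₁ + t₂ = v) (hne : (s₁, s₂) ≠ (t₁, t₂)) :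
    toLex (decRearrange v) < toLex (decRearrange (s₁ + t₂)) ∨
    toLex (decRearrange v) < toLex (decRearrange (t₁ + s₂)) := by
  have hsum : (s₁ + t₂) + (t₁ + s₂) = v + v :=
    calc (s₁ + t₂) + (t₁ + s₂) = (s₁ + s₂) + (t₁ + t₂) := by abel
      _ = v + v := by rw [h1, h2]
  have hne' : s₁ + t₂ ≠ v := by
    intro h
    have hs₁ : s₁ = t₁ := add_right_cancel (h.trans h2.symm)
    have hs₂ : s₂ = t₂ := add_left_cancel (h1.trans h.symm)
    exact hne (by rw [hs₁, hs₂])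
  obtain ⟨x, habove, hx⟩ := exists_superlevel_ssubset_of_add_eq_add_self hsum hne'
  refine hx.imp (fun hlt => ?_) (fun hlt => ?_)
  · exact toLex_decRearrange_lt_of_card_superlevel_lt x
      (fun y hy => congrArg card (habove y hy).1.symm) (card_lt_card hlt)
  · exact toLex_decRearrange_lt_of_card_superlevel_lt x
      (fun y hy => congrArg card (habove y hy).2.symm) (card_lt_card hlt)
end

section
/- Let F ∈ {ℝ, ℂ}, let I₁, I₂ be disjoint finite sets, and let 𝒱 be a linear subspace of F^{I₁} ⊗ F^{I₂} (identified with I₁ × I₂ matrices) such that every element of 𝒱 has rank at most 1. If 𝒱 contains a nonzero element u* ⊗ v* (with u* ∈ F^{I₁}, v* ∈ F^{I₂} nonzero), then every T ∈ 𝒱 is of the form u* ⊗ x for some x ∈ F^{I₂}, or of the form y ⊗ v* for some y ∈ F^{I₁}. -/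
/-!
If `a ⊗ b` and `u ⊗ v` both lie in `V`, so does their sum, and every 2 × 2 minor of
`u ⊗ v + a ⊗ b` factors as `(uᵢ aᵢ' - uᵢ' aᵢ)(vⱼ bⱼ' - vⱼ' bⱼ)`. Since the sum has rank at most
one these minors vanish, so either all minors of the pair `(u, a)` vanish and `a ∥ u`, or all
minors of `(v, b)` vanish and `b ∥ v`.
-/

open Matrix

theorem Matrix.mul_mul_eq_of_rank_le_one {R : Type*} [CommRing R] [IsDomain R] {m n : Type*}
    [Fintype n] {M : Matrix m n R} (h : M.rank ≤ 1) (i i' : m) (j j' : n) :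
    M i j * M i' j' = M i j' * M i' j := by
  by_contra hne
  have hdet : (M.submatrix ![i, i'] ![j, j']).det ≠ 0 := by
    rw [det_fin_two]
    simpa [sub_eq_zero] using hne
  have := (rank_of_det_ne_zero hdet).symm.trans_le ((rank_submatrix_le _ _ _).trans h)
  simp at this

theorem exists_eq_smul_of_forall_mul_eq_mul {F ι : Type*} [Field F] {u a : ι → F} (hu : u ≠ 0)
    (h : ∀ i i', u i * a i' = u i' * a i) : ∃ c : F, a = c • u := by
  obtain ⟨i₀, hi₀⟩ := Function.ne_iff.mp hu
  refine ⟨a i₀ / u i₀, funext fun i => ?_⟩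
  rw [Pi.smul_apply, smul_eq_mul, div_mul_eq_mul_div, eq_div_iff hi₀]
  linear_combination h i₀ i

theorem Matrix.exists_eq_vecMulVec_of_rank_le_one {F m n : Type*} [Field F] [Fintype n]
    {M : Matrix m n F} (h : M.rank ≤ 1) : ∃ (a : m → F) (b : n → F), M = vecMulVec a b := by
  by_cases hM : M = 0
  · exact ⟨0, 0, by simp [hM]⟩
  obtain ⟨i₀, hi₀⟩ : ∃ i₀, M i₀ ≠ 0 := by
    by_contra! hrows
    exact hM (funext hrows)
  choose c hc using fun i =>
    exists_eq_smul_of_forall_mul_eq_mul hi₀ fun j j' => mul_mul_eq_of_rank_le_one h i₀ i j j'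
  exact ⟨c, M i₀, funext fun i => funext fun j => by simp [vecMulVec_apply, hc i]⟩

theorem Matrix.exists_eq_smul_or_exists_eq_smul_of_rank_add_vecMulVec_le_one {F m n : Type*}
    [Field F] [Fintype n] {u a : m → F} {v b : n → F} (hu : u ≠ 0) (hv : v ≠ 0)
    (h : (vecMulVec u v + vecMulVec a b).rank ≤ 1) :
    (∃ c : F, a = c • u) ∨ ∃ c : F, b = c • v := by
  have hminor : ∀ i i' j j', (u i * a i' - u i' * a i) * (v j * b j' - v j' * b j) = 0 := by
    intro i i' j j'
    have := mul_mul_eq_of_rank_le_one h i i' j j'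
    simp only [add_apply, vecMulVec_apply] at this
    linear_combination this
  by_cases hua : ∀ i i', u i * a i' = u i' * a i
  · exact Or.inl (exists_eq_smul_of_forall_mul_eq_mul hu hua)
  push Not at hua
  obtain ⟨i, i', hne⟩ := hua
  refine Or.inr (exists_eq_smul_of_forall_mul_eq_mul hv fun j j' => ?_)
  exact sub_eq_zero.mp ((mul_eq_zero.mp (hminor i i' j j')).resolve_left (sub_ne_zero.mpr hne))

/-- Let `F ∈ {ℝ, ℂ}` (formalised via `RCLike`) and let `V` be a linear
subspace of the space of `m × n` matrices over `F` (identified with `F^{I₁} ⊗ F^{I₂}`)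
such that every element of `V` has rank at most 1. If `V` contains an element `u* ⊗ v*`
with `u*, v*` nonzero (so this element is nonzero), then every `T ∈ V` is of the form
`u* ⊗ x` for some `x`, or of the form `y ⊗ v*` for some `y`. Here `u ⊗ v` is the matrix
`vecMulVec u v` with entries `u(i)·v(j)`. -/
theorem stmt10 (F : Type*) [RCLike F] (m n : ℕ)
    (V : Submodule F (Matrix (Fin m) (Fin n) F))
    (hrank : ∀ T ∈ V, Matrix.rank T ≤ 1)
    (u : Fin m → F) (v : Fin n → F) (hu : u ≠ 0) (hv : v ≠ 0)
    (hmem : Matrix.vecMulVec u v ∈ V) :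
    ∀ T ∈ V, (∃ x : Fin n → F, T = Matrix.vecMulVec u x) ∨
      (∃ y : Fin m → F, T = Matrix.vecMulVec y v) := by
  intro T hT
  obtain ⟨a, b, rfl⟩ := exists_eq_vecMulVec_of_rank_le_one (hrank T hT)
  rcases exists_eq_smul_or_exists_eq_smul_of_rank_add_vecMulVec_le_one hu hv
      (hrank _ (V.add_mem hmem hT)) with ⟨c, rfl⟩ | ⟨c, rfl⟩
  · exact Or.inl ⟨c • b, by rw [smul_vecMulVec, vecMulVec_smul]⟩
  · exact Or.inr ⟨c • a, by rw [smul_vecMulVec, vecMulVec_smul]⟩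
end

section
/- Let F be a field, n ≥ 1 an integer, and A ∈ F^{n×n} a matrix. For any subsets I, J ⊆ {1,...,n}, rank(A) ≥ rank(A[I, {1,...,n}]) + rank(A[{1,...,n}, J]) − rank(A[I, J]). -/
/-! Let `U` be the column space of `A`, `W ≤ U` the span of the columns indexed by `J`, and `π` the
restriction of vectors to the rows in `I`. Then the four ranks are `dim U`, `dim π U`, `dim W` and
`dim π W`, and the inequality says `dim U - dim π U ≥ dim W - dim π W`. By rank-nullity the two
sides are `dim (U ⊓ ker π)` and `dim (W ⊓ ker π)`, and `W ≤ U`. -/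

open Submodule Module Matrix

namespace Submodule

variable {K V V' : Type*} [Field K] [AddCommGroup V] [Module K V] [AddCommGroup V'] [Module K V']

theorem finrank_map_add_finrank_inf_ker (f : V →ₗ[K] V') (U : Submodule K V)
    [FiniteDimensional K U] :
    finrank K (U.map f) + finrank K ↥(U ⊓ LinearMap.ker f) = finrank K U := by
  have h := LinearMap.finrank_range_add_finrank_ker (f.domRestrict U)
  rwa [LinearMap.range_domRestrict, LinearMap.ker_domRestrict, ← finrank_map_subtype_eq,
    map_comap_subtype] at h

theorem finrank_map_add_finrank_le_of_le (f : V →ₗ[K] V') {U W : Submodule K V}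
    [FiniteDimensional K U] (hWU : W ≤ U) :
    finrank K (U.map f) + finrank K W ≤ finrank K U + finrank K (W.map f) := by
  have : FiniteDimensional K W := finiteDimensional_of_le hWU
  have hU := finrank_map_add_finrank_inf_ker f U
  have hW := finrank_map_add_finrank_inf_ker f W
  have hker : finrank K ↥(W ⊓ LinearMap.ker f) ≤ finrank K ↥(U ⊓ LinearMap.ker f) :=
    finrank_mono (inf_le_inf_right _ hWU)
  omega

end Submodule

namespace Matrix

variable {R K m n m₀ n₀ : Type*}

theorem rank_submatrix_eq_finrank_map_span [CommSemiring R] [Fintype n₀] (A : Matrix m n R)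
    (r : m₀ → m) (c : n₀ → n) :
    (A.submatrix r c).rank =
      finrank R ((span R (A.col '' Set.range c)).map (LinearMap.funLeft R R r)) := by
  rw [rank_eq_finrank_span_cols, map_span, ← Set.range_comp, ← Set.range_comp]
  rfl

theorem rank_submatrix_left_add_rank_submatrix_right_le [Field K] [Fintype n] [Fintype n₀]
    (A : Matrix m n K) (r : m₀ → m) (c : n₀ → n) :
    (A.submatrix r id).rank + (A.submatrix id c).rank ≤ A.rank + (A.submatrix r c).rank := by
  have hA : A.rank = finrank K (span K (Set.range A.col)) := rank_eq_finrank_span_cols A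
  have hc : (A.submatrix id c).rank = finrank K (span K (A.col '' Set.range c)) := by
    rw [rank_eq_finrank_span_cols, ← Set.range_comp]
    rfl
  rw [hA, hc, rank_submatrix_eq_finrank_map_span, rank_submatrix_eq_finrank_map_span,
    Set.range_id, Set.image_univ]
  have : FiniteDimensional K (span K (Set.range A.col)) :=
    FiniteDimensional.span_of_finite K (Set.finite_range _)
  exact finrank_map_add_finrank_le_of_le _ (span_mono (Set.image_subset_range _ _))

end Matrix

theorem stmt11_general (F : Type*) [Field F] (n : ℕ)
    (A : Matrix (Fin n) (Fin n) F) (I J : Finset (Fin n)) :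
    (A.submatrix (fun i : {x // x ∈ I} => i.1) id).rank +
      (A.submatrix id (fun j : {x // x ∈ J} => j.1)).rank ≤
    A.rank + (A.submatrix (fun i : {x // x ∈ I} => i.1) (fun j : {x // x ∈ J} => j.1)).rank :=
  rank_submatrix_left_add_rank_submatrix_right_le A _ _

/-- Let `F` be a field, `n ≥ 1`, and `A ∈ F^{n×n}`. For any subsets
`I, J ⊆ {1,...,n}`,
`rank(A) ≥ rank(A[I, {1,...,n}]) + rank(A[{1,...,n}, J]) − rank(A[I, J])`,
stated additively as
`rank(A[I,·]) + rank(A[·,J]) ≤ rank(A) + rank(A[I,J])`. -/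
theorem stmt11 (F : Type*) [Field F] (n : ℕ) (hn : 1 ≤ n)
    (A : Matrix (Fin n) (Fin n) F) (I J : Finset (Fin n)) :
    (A.submatrix (fun i : {x // x ∈ I} => i.1) id).rank +
      (A.submatrix id (fun j : {x // x ∈ J} => j.1)).rank ≤
    A.rank + (A.submatrix (fun i : {x // x ∈ I} => i.1) (fun j : {x // x ∈ J} => j.1)).rank :=
  stmt11_general F n A I J
end

section
/- Let F be a field, let n ≥ q ≥ 1 be integers, let γ > 0, and let A ∈ F^{n×n} be a matrix of rank at most q. Then there exist k ∈ {0,...,q} and a subset I ⊆ {1,...,n} with |I| ≥ (1 − qγ)n such that rank(A[I', I']) = rank(A[I, I]) = k for every subset I' ⊆ I with |I'| ≥ |I| − γn. -/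
open Matrix

private lemma rank_submatrix_le_gen {F : Type*} [Field F] {l l' m : Type*}
    [Fintype l] [Fintype l'] [Fintype m] [DecidableEq m]
    (f : l → m) (g : l' → m) (A : Matrix m m F) :
    (A.submatrix f g).rank ≤ A.rank := by
  have h : A.submatrix f g =
      (Matrix.of fun (i : l) (j : m) => if j = f i then (1 : F) else 0) * A *
      (Matrix.of fun (j : m) (k : l') => if j = g k then (1 : F) else 0) := by
    ext i k
    simp [Matrix.mul_apply, Finset.sum_ite_eq', Finset.sum_ite_eq]
  rw [h]
  exact le_trans (Matrix.rank_mul_le_left _ _) (Matrix.rank_mul_le_right _ _)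

/-- Let `F` be a field, `n ≥ q ≥ 1`, `γ > 0`, and `A ∈ F^{n×n}` of rank
at most `q`. Then there exist `k ∈ {0,...,q}` and `I ⊆ {1,...,n}` with `|I| ≥ (1 − qγ)n`
such that `rank(A[I',I']) = rank(A[I,I]) = k` for every `I' ⊆ I` with `|I'| ≥ |I| − γn`. -/
theorem stmt12 (F : Type*) [Field F] (n q : ℕ) (hq : 1 ≤ q) (hqn : q ≤ n)
    (γ : ℝ) (hγ : 0 < γ) (A : Matrix (Fin n) (Fin n) F) (hA : A.rank ≤ q) :
    ∃ k ≤ q, ∃ I : Finset (Fin n),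
      (1 - q * γ) * n ≤ (I.card : ℝ) ∧
      (A.submatrix (fun i : {x // x ∈ I} => i.1) (fun i : {x // x ∈ I} => i.1)).rank = k ∧
      ∀ I' ⊆ I, (I.card : ℝ) - γ * n ≤ (I'.card : ℝ) →
        (A.submatrix (fun i : {x // x ∈ I'} => i.1) (fun i : {x // x ∈ I'} => i.1)).rank = k := by
  classical
  set P : ℕ → Prop := fun k => ∃ I : Finset (Fin n),
      ((1 : ℝ) - ((q : ℝ) - k) * γ) * n ≤ (I.card : ℝ) ∧
      (A.submatrix (fun i : {x // x ∈ I} => i.1) (fun i : {x // x ∈ I} => i.1)).rank ≤ k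
      with hP
  have hPq : P q := by
    refine ⟨Finset.univ, ?_, ?_⟩
    · simp
    · exact le_trans (rank_submatrix_le_gen _ _ A) hA
  have hex : ∃ k, P k := ⟨q, hPq⟩
  set k := Nat.find hex with hkdef
  have hk : P k := Nat.find_spec hex
  have hkq : k ≤ q := Nat.find_min' hex hPq
  obtain ⟨I, hIcard, hIrank⟩ := hk
  -- key: any J with big enough card has rank ≥ k
  have key : ∀ J : Finset (Fin n),
      ((1 : ℝ) - ((q : ℝ) - k) * γ) * n - γ * n ≤ (J.card : ℝ) →
      (A.submatrix (fun i : {x // x ∈ J} => i.1) (fun i : {x // x ∈ J} => i.1)).rank < k →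
      False := by
    intro J hJcard hJrank
    have hk1 : 1 ≤ k := Nat.one_le_iff_ne_zero.mpr (by intro h0; omega)
    have : P (k - 1) := by
      refine ⟨J, ?_, Nat.le_sub_one_of_lt hJrank⟩
      have hc : ((k - 1 : ℕ) : ℝ) = (k : ℝ) - 1 := by
        push_cast [hk1]; ring
      rw [hc]
      nlinarith [hJcard]
    exact Nat.find_min hex (by omega) this
  have hIrankEq :
      (A.submatrix (fun i : {x // x ∈ I} => i.1) (fun i : {x // x ∈ I} => i.1)).rank = k := by
    rcases lt_or_eq_of_le hIrank with h | h
    · exfalso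
      refine key I ?_ h
      have hn0 : (0 : ℝ) ≤ (n : ℝ) := Nat.cast_nonneg n
      nlinarith [mul_nonneg hγ.le hn0]
    · exact h
  refine ⟨k, hkq, I, ?_, hIrankEq, ?_⟩
  · have hn0 : (0 : ℝ) ≤ (n : ℝ) := Nat.cast_nonneg n
    have hk0 : (0 : ℝ) ≤ (k : ℝ) := Nat.cast_nonneg k
    nlinarith [mul_nonneg (mul_nonneg hk0 hγ.le) hn0]
  · intro I' hsub hcard
    have hfac : (A.submatrix (fun i : {x // x ∈ I'} => i.1) (fun i : {x // x ∈ I'} => i.1)) =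
        (A.submatrix (fun i : {x // x ∈ I} => i.1) (fun i : {x // x ∈ I} => i.1)).submatrix
          (fun i : {x // x ∈ I'} => (⟨i.1, hsub i.2⟩ : {x // x ∈ I}))
          (fun i : {x // x ∈ I'} => (⟨i.1, hsub i.2⟩ : {x // x ∈ I})) := by
      ext i j; rfl
    have hle : (A.submatrix (fun i : {x // x ∈ I'} => i.1)
        (fun i : {x // x ∈ I'} => i.1)).rank ≤ k := by
      rw [hfac, ← hIrankEq]
      exact rank_submatrix_le_gen _ _ _
    rcases lt_or_eq_of_le hle with h | h
    · exfalso
      apply key I' _ h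
      linarith [hIcard, hcard]
    · exact h
end

section
/- Let F be a field, let C ∈ F^{r×r} be an invertible symmetric matrix, let Q ∈ F^{m×r} be any matrix, and let P ∈ F^{m×r}. Define the block matrix B = [[C, CPᵀ + Qᵀ], [PC + Q, PCPᵀ + PQᵀ + QPᵀ]] ∈ F^{(r+m)×(r+m)}. Then B is symmetric and rank(B) ≤ rank(C) + 2·rank(Q). -/
/-!
With `L = [[1, 0], [P, 1]]` one has `B = L * [[C, Qᵀ], [Q, 0]] * Lᵀ`. Congruence by `L` preserves
symmetry, and since `L` is unipotent it also preserves rank; the middle matrix is assembled from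
the blocks `C`, `Qᵀ`, `Q`, so its rank is at most `rank C + 2 rank Q`.
-/

open Matrix

namespace Matrix

section Rank

variable {F : Type*} [Field F] {m m₁ m₂ n n₁ n₂ : Type*}

theorem rank_fromCols_le [Fintype m] [Fintype n₁] [Fintype n₂] (A₁ : Matrix m n₁ F) (A₂ : Matrix m n₂ F) :
    (fromCols A₁ A₂).rank ≤ A₁.rank + A₂.rank := by
  have hcols : Set.range (fromCols A₁ A₂).col = Set.range A₁.col ∪ Set.range A₂.col := by
    rw [← Set.Sum.elim_range]
    congr 1
    ext (j | j) i <;> rfl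
  rw [rank_eq_finrank_span_cols, hcols, Submodule.span_union, rank_eq_finrank_span_cols,
    rank_eq_finrank_span_cols]
  exact Submodule.finrank_add_le_finrank_add_finrank _ _

theorem rank_fromRows_le [Fintype m₁] [Fintype m₂] [Fintype n] (A₁ : Matrix m₁ n F)
    (A₂ : Matrix m₂ n F) : (fromRows A₁ A₂).rank ≤ A₁.rank + A₂.rank := by
  rw [← rank_transpose, transpose_fromRows, ← rank_transpose A₁, ← rank_transpose A₂]
  exact rank_fromCols_le _ _

theorem rank_fromBlocks_zero₂₂_le [Fintype m₁] [Fintype m₂] [Fintype n₁] [Fintype n₂]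
    (A : Matrix m₁ n₁ F) (B : Matrix m₁ n₂ F) (C : Matrix m₂ n₁ F) :
    (fromBlocks A B C 0).rank ≤ A.rank + B.rank + C.rank := by
  rw [← fromRows_fromCols_eq_fromBlocks]
  calc (fromRows (fromCols A B) (fromCols C 0)).rank
      ≤ (fromCols A B).rank + (fromCols C (0 : Matrix m₂ n₂ F)).rank := rank_fromRows_le _ _
    _ ≤ (A.rank + B.rank) + (C.rank + (0 : Matrix m₂ n₂ F).rank) :=
        add_le_add (rank_fromCols_le _ _) (rank_fromCols_le _ _)
    _ = A.rank + B.rank + C.rank := by rw [rank_zero, add_zero, add_assoc]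

end Rank

theorem IsSymm.mul_mul_transpose {α n m : Type*} [CommSemiring α] [Fintype n] [Fintype m]
    {B : Matrix n n α} (hB : B.IsSymm) (A : Matrix m n α) : (A * B * Aᵀ).IsSymm := by
  rw [IsSymm, transpose_mul, transpose_mul, transpose_transpose, hB.eq, Matrix.mul_assoc]

theorem fromBlocks_eq_unipotent_mul_mul_transpose {α m n : Type*} [CommRing α] [Fintype m]
    [Fintype n] [DecidableEq m] [DecidableEq n] (C : Matrix n n α) (Q P : Matrix m n α) :
    fromBlocks C (C * Pᵀ + Qᵀ) (P * C + Q) (P * C * Pᵀ + P * Qᵀ + Q * Pᵀ) =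
      fromBlocks 1 0 P 1 * fromBlocks C Qᵀ Q 0 * (fromBlocks 1 0 P 1)ᵀ := by
  rw [fromBlocks_transpose, fromBlocks_multiply, fromBlocks_multiply]
  congr 1 <;> simp [Matrix.mul_assoc, Matrix.add_mul]; abel

end Matrix

theorem stmt13_general (F : Type*) [Field F] (r m : ℕ)
    (C : Matrix (Fin r) (Fin r) F) (hCsymm : C.IsSymm)
    (Q P : Matrix (Fin m) (Fin r) F) :
    (Matrix.fromBlocks C (C * Pᵀ + Qᵀ) (P * C + Q) (P * C * Pᵀ + P * Qᵀ + Q * Pᵀ)).IsSymm ∧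
    (Matrix.fromBlocks C (C * Pᵀ + Qᵀ) (P * C + Q) (P * C * Pᵀ + P * Qᵀ + Q * Pᵀ)).rank ≤
      C.rank + 2 * Q.rank := by
  rw [fromBlocks_eq_unipotent_mul_mul_transpose]
  set L : Matrix (Fin r ⊕ Fin m) (Fin r ⊕ Fin m) F := fromBlocks 1 0 P 1
  have hL : IsUnit L.det := by simp [L]
  refine ⟨(hCsymm.fromBlocks (transpose_transpose Q) isSymm_zero).mul_mul_transpose L, ?_⟩
  rw [rank_mul_eq_left_of_isUnit_det _ _ (by rwa [det_transpose]),
    rank_mul_eq_right_of_isUnit_det _ _ hL]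
  calc (fromBlocks C Qᵀ Q 0).rank ≤ C.rank + Qᵀ.rank + Q.rank := rank_fromBlocks_zero₂₂_le _ _ _
    _ = C.rank + 2 * Q.rank := by rw [rank_transpose]; ring

/-- Let `F` be a field, `C ∈ F^{r×r}` an invertible symmetric matrix,
and `Q, P ∈ F^{m×r}`. The block matrix
`B = [[C, CPᵀ + Qᵀ], [PC + Q, PCPᵀ + PQᵀ + QPᵀ]]`
is symmetric and satisfies `rank(B) ≤ rank(C) + 2·rank(Q)`. -/
theorem stmt13 (F : Type*) [Field F] (r m : ℕ)
    (C : Matrix (Fin r) (Fin r) F) (hCsymm : C.IsSymm) (hCinv : IsUnit C.det)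
    (Q P : Matrix (Fin m) (Fin r) F) :
    (Matrix.fromBlocks C (C * Pᵀ + Qᵀ) (P * C + Q) (P * C * Pᵀ + P * Qᵀ + Q * Pᵀ)).IsSymm ∧
    (Matrix.fromBlocks C (C * Pᵀ + Qᵀ) (P * C + Q) (P * C * Pᵀ + P * Qᵀ + Q * Pᵀ)).rank ≤
      C.rank + 2 * Q.rank :=
  stmt13_general F r m C hCsymm Q P
end

section
/- Let F be a field, let n, m ≥ r ≥ 1 be integers and α ∈ [0,1]. Let A ∈ F^{n×m} be a matrix such that all but at most an α-fraction of its r×r submatrices are singular. Then there exists a matrix B ∈ F^{n×m} of rank less than r such that the number of entries where A and B differ is at most α^{1/r}·nm. -/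
/-!
Let `d` be the least number of entries in which `A` differs from a matrix of rank `< r`. If the
`k × k` minor `A[f, g]` is nonsingular and `k < r`, the Schur complement formula shows that
bordering it by a row `i` and a column `j` gives a nonsingular minor exactly when `A i j` differs
from the entry of the rank-`k` matrix `A[·, g] A[f, g]⁻¹ A[f, ·]`, which happens for at least `d`
pairs `(i, j)`. Hence at least `d ^ r` ordered choices of `r` rows and `r` columns give a
nonsingular minor. Each nonsingular `r × r` submatrix arises from at most `(r!)²` orderings, so
`d ^ r ≤ (r!)² · α · C(n, r) · C(m, r) ≤ α (nm) ^ r`.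
-/

open Finset Function Matrix
open scoped Nat

theorem card_injective_mapsTo_le {α : Type*} [Fintype α] [DecidableEq α] (s : Finset α)
    (r : ℕ) : #{f : Fin r → α | Injective f ∧ ∀ i, f i ∈ s} ≤ (#s).descFactorial r :=
  calc _ ≤ #(univ : Finset (Fin r ↪ s)) := by
        refine card_le_card_of_surjOn (fun e => Subtype.val ∘ e) fun f hf => ?_
        simp only [coe_filter, mem_univ, true_and, Set.mem_ofPred_eq] at hf
        exact ⟨⟨fun i => ⟨f i, hf.2 i⟩, fun a b h => hf.1 (congrArg Subtype.val h)⟩,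
          mem_coe.2 (mem_univ _), rfl⟩
    _ = (#s).descFactorial r := by
        rw [card_univ, Fintype.card_embedding_eq, Fintype.card_fin, Fintype.card_coe]

theorem factorial_mul_choose_le_pow (n r : ℕ) : r ! * n.choose r ≤ n ^ r :=
  (Nat.descFactorial_eq_factorial_mul_choose n r).symm.trans_le (Nat.descFactorial_le_pow n r)

theorem le_rpow_one_div_mul_of_pow_le {x y α : ℝ} {r : ℕ} (hr : r ≠ 0) (hx : 0 ≤ x) (hy : 0 ≤ y)
    (hα : 0 ≤ α) (h : x ^ r ≤ α * y ^ r) : x ≤ α ^ (1 / r : ℝ) * y :=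
  calc x = (x ^ r) ^ (r⁻¹ : ℝ) := (Real.pow_rpow_inv_natCast hx hr).symm
    _ ≤ (α * y ^ r) ^ (r⁻¹ : ℝ) := by gcongr
    _ = α ^ (1 / r : ℝ) * y := by
      rw [Real.mul_rpow hα (by positivity), Real.pow_rpow_inv_natCast hy hr, one_div]

theorem Fin.snoc_comp_finSumFinEquiv {α : Type*} {k : ℕ} (f : Fin k → α) (a : α) :
    Fin.snoc f a ∘ finSumFinEquiv = Sum.elim f fun _ : Fin 1 => a := by
  ext (l | l)
  · exact Fin.snoc_castSucc ..
  · rw [Fin.fin_one_eq_zero l]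
    exact Fin.snoc_last ..

namespace Matrix

variable {F ι κ : Type*} [Field F]

/-- The skeleton (CUR) approximation of `A` through the rows `f` and columns `g`:
`A - crossApprox A f g` is the Schur complement of `A[f, g]`. -/
noncomputable def crossApprox {k : ℕ} (A : Matrix ι κ F) (f : Fin k → ι) (g : Fin k → κ) :
    Matrix ι κ F :=
  A.submatrix id g * (A.submatrix f g)⁻¹ * A.submatrix f id

theorem rank_crossApprox_le [Fintype κ] {k : ℕ} (A : Matrix ι κ F) (f : Fin k → ι)
    (g : Fin k → κ) : (crossApprox A f g).rank ≤ k :=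
  (rank_mul_le_right _ _).trans <| (rank_le_card_height _).trans_eq (Fintype.card_fin k)

theorem det_submatrix_snoc_snoc {k : ℕ} (A : Matrix ι κ F) {f : Fin k → ι} {g : Fin k → κ}
    (hA : (A.submatrix f g).det ≠ 0) (i : ι) (j : κ) :
    (A.submatrix (Fin.snoc f i) (Fin.snoc g j)).det =
      (A.submatrix f g).det * (A i j - crossApprox A f g i j) := by
  have : Invertible (A.submatrix f g) := invertibleOfIsUnitDet _ (isUnit_iff_ne_zero.2 hA)
  have hblocks : (A.submatrix (Fin.snoc f i) (Fin.snoc g j)).submatrix finSumFinEquiv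
      finSumFinEquiv = fromBlocks (A.submatrix f g) (A.submatrix f fun _ : Fin 1 => j)
        (A.submatrix (fun _ : Fin 1 => i) g)
        (A.submatrix (fun _ : Fin 1 => i) fun _ : Fin 1 => j) := by
    rw [submatrix_submatrix, Fin.snoc_comp_finSumFinEquiv, Fin.snoc_comp_finSumFinEquiv]
    ext (a | a) (b | b) <;> rfl
  rw [← det_submatrix_equiv_self finSumFinEquiv, hblocks, det_fromBlocks₁₁, det_fin_one]
  simp [crossApprox, mul_apply, invOf_eq_nonsing_inv]

section InjectiveOfDetSubmatrix

variable {m : Type*} [Fintype m] [DecidableEq m] {A : Matrix ι κ F} {f : m → ι} {g : m → κ}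

theorem injective_left_of_det_submatrix_ne_zero (h : (A.submatrix f g).det ≠ 0) :
    Injective f := fun a b hab => by
  by_contra hne
  exact h (det_zero_of_row_eq hne (funext fun c => by simp [hab]))

theorem injective_right_of_det_submatrix_ne_zero (h : (A.submatrix f g).det ≠ 0) :
    Injective g := fun a b hab => by
  by_contra hne
  exact h (det_zero_of_column_eq hne fun c => by simp [hab])

end InjectiveOfDetSubmatrix

theorem rank_submatrix_subtype_val_of_image_eq [DecidableEq ι] [DecidableEq κ] {k : ℕ}
    (A : Matrix ι κ F) {f : Fin k → ι} {g : Fin k → κ} (hf : Injective f) (hg : Injective g)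
    {S : Finset ι} {T : Finset κ} (hS : univ.image f = S) (hT : univ.image g = T) :
    (A.submatrix (fun i : {x // x ∈ S} => i.1) (fun j : {x // x ∈ T} => j.1)).rank =
      (A.submatrix f g).rank := by
  let eRows : Fin k ≃ {x // x ∈ S} :=
    (Equiv.ofInjective f hf).trans (Equiv.subtypeEquivRight (by simp [← hS]))
  let eCols : Fin k ≃ {x // x ∈ T} :=
    (Equiv.ofInjective g hg).trans (Equiv.subtypeEquivRight (by simp [← hT]))
  exact (rank_submatrix _ eRows eCols).symm

variable [Fintype ι] [Fintype κ]

noncomputable def nonsingularMinors (A : Matrix ι κ F) (r : ℕ) : Finset (Finset ι × Finset κ) :=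
  (univ.powersetCard r ×ˢ univ.powersetCard r).filter fun st =>
    (A.submatrix (fun i : {x // x ∈ st.1} => i.1) (fun j : {x // x ∈ st.2} => j.1)).rank = r

variable [DecidableEq F]

theorem exists_rank_lt_forall_hammingDist_le {r : ℕ} (hr : 0 < r) (A : Matrix ι κ F) :
    ∃ B : Matrix ι κ F, B.rank < r ∧ ∀ B' : Matrix ι κ F, B'.rank < r →
      hammingDist (uncurry A) (uncurry B) ≤ hammingDist (uncurry A) (uncurry B') := by
  have hzero : (0 : Matrix ι κ F).rank < r := by rwa [rank_zero]
  let dist (B : Matrix ι κ F) : ℕ := hammingDist (uncurry A) (uncurry B)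
  exact ⟨argminOn dist {B | B.rank < r} ⟨0, hzero⟩, argminOn_mem dist {B | B.rank < r} _,
    fun B' hB' => argminOn_le dist _ hB'⟩

def nonsingularPairs (A : Matrix ι κ F) (k : ℕ) : Finset ((Fin k → ι) × (Fin k → κ)) :=
  {fg | (A.submatrix fg.1 fg.2).det ≠ 0}

theorem mem_nonsingularPairs {A : Matrix ι κ F} {k : ℕ} {fg : (Fin k → ι) × (Fin k → κ)} :
    fg ∈ A.nonsingularPairs k ↔ (A.submatrix fg.1 fg.2).det ≠ 0 := by
  simp [nonsingularPairs]

theorem le_card_snoc_nonsingular {A : Matrix ι κ F} {r d k : ℕ} (hk : k < r)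
    (hd : ∀ B : Matrix ι κ F, B.rank < r → d ≤ hammingDist (uncurry A) (uncurry B))
    {f : Fin k → ι} {g : Fin k → κ} (hA : (A.submatrix f g).det ≠ 0) :
    d ≤ #{ij : ι × κ | (A.submatrix (Fin.snoc f ij.1) (Fin.snoc g ij.2)).det ≠ 0} := by
  have hcross := hd _ ((rank_crossApprox_le A f g).trans_lt hk)
  refine hcross.trans_eq (congrArg card (filter_congr fun ij _ => ?_))
  rw [det_submatrix_snoc_snoc A hA, mul_ne_zero_iff, sub_ne_zero, and_iff_right hA]
  rfl

theorem card_nonsingularPairs_mul_le (A : Matrix ι κ F) {r d k : ℕ} (hk : k < r)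
    (hd : ∀ B : Matrix ι κ F, B.rank < r → d ≤ hammingDist (uncurry A) (uncurry B)) :
    #(A.nonsingularPairs k) * d ≤ #(A.nonsingularPairs (k + 1)) := by
  set extensions : (Fin k → ι) × (Fin k → κ) → Finset (ι × κ) := fun fg =>
    {ij | (A.submatrix (Fin.snoc fg.1 ij.1) (Fin.snoc fg.2 ij.2)).det ≠ 0}
  calc #(A.nonsingularPairs k) * d
      ≤ ∑ fg ∈ A.nonsingularPairs k, #(extensions fg) := by
        rw [← smul_eq_mul, ← sum_const]
        exact sum_le_sum fun fg hfg =>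
          le_card_snoc_nonsingular hk hd (mem_nonsingularPairs.1 hfg)
    _ = #((A.nonsingularPairs k).sigma extensions) := (card_sigma _ _).symm
    _ ≤ #(A.nonsingularPairs (k + 1)) := by
        refine card_le_card_of_injOn (fun x => (Fin.snoc x.1.1 x.2.1, Fin.snoc x.1.2 x.2.2))
          ?_ ?_
        · rintro ⟨fg, ij⟩ h
          simp only [coe_sigma, Set.mem_sigma_iff, mem_coe, extensions, mem_filter_univ] at h
          exact mem_nonsingularPairs.2 h.2
        · rintro ⟨⟨f, g⟩, i, j⟩ - ⟨⟨f', g'⟩, i', j'⟩ - h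
          simp only [Prod.mk.injEq, Fin.snoc_inj] at h
          obtain ⟨⟨rfl, rfl⟩, rfl, rfl⟩ := h
          rfl

theorem pow_le_card_nonsingularPairs (A : Matrix ι κ F) {r d : ℕ}
    (hd : ∀ B : Matrix ι κ F, B.rank < r → d ≤ hammingDist (uncurry A) (uncurry B))
    {k : ℕ} (hk : k ≤ r) : d ^ k ≤ #(A.nonsingularPairs k) := by
  induction k with
  | zero => exact card_pos.2 ⟨(finZeroElim, finZeroElim), by simp [mem_nonsingularPairs]⟩
  | succ k ih =>
    rw [pow_succ]
    exact (Nat.mul_le_mul_right d (ih (k.le_succ.trans hk))).trans <|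
      card_nonsingularPairs_mul_le A hk hd

variable [DecidableEq ι] [DecidableEq κ]

theorem card_nonsingularPairs_le (A : Matrix ι κ F) (r : ℕ) :
    #(A.nonsingularPairs r) ≤ r ! * r ! * #(A.nonsingularMinors r) := by
  refine card_le_mul_card_image_of_maps_to (f := fun fg => (univ.image fg.1, univ.image fg.2))
    ?_ _ ?_
  · intro fg hfg
    have hdet := mem_nonsingularPairs.1 hfg
    have hf := injective_left_of_det_submatrix_ne_zero hdet
    have hg := injective_right_of_det_submatrix_ne_zero hdet
    simp only [nonsingularMinors, mem_filter, mem_product, mem_powersetCard_univ,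
      card_image_of_injective _ hf, card_image_of_injective _ hg, card_univ, Fintype.card_fin,
      rank_submatrix_subtype_val_of_image_eq A hf hg rfl rfl, true_and]
    rw [rank_of_isUnit _ ((isUnit_iff_isUnit_det _).2 (isUnit_iff_ne_zero.2 hdet)),
      Fintype.card_fin]
  · rintro ⟨S, T⟩ hST
    obtain ⟨⟨hS, hT⟩, -⟩ : (#S = r ∧ #T = r) ∧ _ := by
      simpa only [nonsingularMinors, mem_filter, mem_product, mem_powersetCard_univ] using hST
    calc _ ≤ #(({f : Fin r → ι | Injective f ∧ ∀ i, f i ∈ S} : Finset _) ×ˢ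
            ({g : Fin r → κ | Injective g ∧ ∀ i, g i ∈ T} : Finset _)) := by
          refine card_le_card fun ⟨f, g⟩ hfg => ?_
          simp only [mem_filter, mem_nonsingularPairs, Prod.mk.injEq] at hfg
          obtain ⟨hdet, rfl, rfl⟩ := hfg
          simp only [mem_product, mem_filter_univ]
          exact ⟨⟨injective_left_of_det_submatrix_ne_zero hdet, fun i => by simp⟩,
            injective_right_of_det_submatrix_ne_zero hdet, fun i => by simp⟩
      _ ≤ (#S).descFactorial r * (#T).descFactorial r := by
          rw [card_product]
          exact Nat.mul_le_mul (card_injective_mapsTo_le S r) (card_injective_mapsTo_le T r)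
      _ = r ! * r ! := by rw [hS, hT, Nat.descFactorial_self]

end Matrix

open scoped Classical in
theorem stmt15_general (F : Type*) [Field F] (n m r : ℕ) (hr : 1 ≤ r)
    (α : ℝ) (hα : α ∈ Set.Icc (0:ℝ) 1) (A : Matrix (Fin n) (Fin m) F)
    (h : ((((Finset.univ : Finset (Fin n)).powersetCard r ×ˢ
          (Finset.univ : Finset (Fin m)).powersetCard r).filter
        (fun st => (A.submatrix (fun i : {x // x ∈ st.1} => i.1)
            (fun j : {x // x ∈ st.2} => j.1)).rank = r)).card : ℝ)
          ≤ α * ((n.choose r) * (m.choose r))) :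
    ∃ B : Matrix (Fin n) (Fin m) F, B.rank < r ∧
      (((Finset.univ : Finset (Fin n × Fin m)).filter
          (fun p => A p.1 p.2 ≠ B p.1 p.2)).card : ℝ)
        ≤ α ^ ((1 : ℝ) / r) * (n * m) := by
  obtain ⟨B, hB, hmin⟩ := exists_rank_lt_forall_hammingDist_le hr A
  have hcount : hammingDist (uncurry A) (uncurry B) ^ r ≤ r ! * r ! * #(A.nonsingularMinors r) :=
    (A.pow_le_card_nonsingularPairs hmin le_rfl).trans (A.card_nonsingularPairs_le r)
  have hchoose : r ! * n.choose r * (r ! * m.choose r) ≤ (n * m) ^ r := by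
    rw [mul_pow]
    exact Nat.mul_le_mul (factorial_mul_choose_le_pow n r) (factorial_mul_choose_le_pow m r)
  refine ⟨B, hB, le_rpow_one_div_mul_of_pow_le (by omega) (by positivity) (by positivity) hα.1 ?_⟩
  calc (hammingDist (uncurry A) (uncurry B) : ℝ) ^ r
      ≤ r ! * r ! * #(A.nonsingularMinors r) := by exact_mod_cast hcount
    _ ≤ r ! * r ! * (α * (n.choose r * m.choose r)) := by gcongr; exact h
    _ = α * ((r ! * n.choose r * (r ! * m.choose r) : ℕ) : ℝ) := by push_cast; ring
    _ ≤ α * (n * m) ^ r := mul_le_mul_of_nonneg_left (by exact_mod_cast hchoose) hα.1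

open scoped Classical in
/-- Let `F` be a field, `n, m ≥ r ≥ 1`, `α ∈ [0,1]`, and let
`A ∈ F^{n×m}` be a matrix such that all but at most an `α`-fraction of its `r×r`
submatrices (out of `binom(n,r)·binom(m,r)`, given by a choice of `r` rows and `r`
columns) are singular, i.e. at most `α·binom(n,r)·binom(m,r)` of them are nonsingular.
Then there is a matrix `B ∈ F^{n×m}` of rank less than `r` differing from `A` in at most
`α^{1/r}·nm` entries. -/
theorem stmt15 (F : Type*) [Field F] (n m r : ℕ) (hr : 1 ≤ r) (hrn : r ≤ n) (hrm : r ≤ m)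
    (α : ℝ) (hα : α ∈ Set.Icc (0:ℝ) 1) (A : Matrix (Fin n) (Fin m) F)
    (h : ((((Finset.univ : Finset (Fin n)).powersetCard r ×ˢ
          (Finset.univ : Finset (Fin m)).powersetCard r).filter
        (fun st => (A.submatrix (fun i : {x // x ∈ st.1} => i.1)
            (fun j : {x // x ∈ st.2} => j.1)).rank = r)).card : ℝ)
          ≤ α * ((n.choose r) * (m.choose r))) :
    ∃ B : Matrix (Fin n) (Fin m) F, B.rank < r ∧
      (((Finset.univ : Finset (Fin n × Fin m)).filter
          (fun p => A p.1 p.2 ≠ B p.1 p.2)).card : ℝ)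
        ≤ α ^ ((1 : ℝ) / r) * (n * m) :=
  stmt15_general F n m r hr α hα A h
end

section
/- Fix d ≥ 1, δ > 0, and a field F. Let n₀ be sufficiently large in terms of d and δ. Let T : I₁ × ... × I_d → F be a d-dimensional tensor with |I₁|,...,|I_d| ≥ n₀, let {1,...,d} = J₁ ∪ J₂ be a non-trivial partition, and suppose T(i₁*,...,i_d*) ≠ 0 for some indices i_j* ∈ I_j. Suppose all but at most a δ-fraction of the 2×...×2 subtensors of T containing the entry (i₁*,...,i_d*) are reducible with respect to {J₁, J₂}. Then one can change at most a 2δ-fraction of the entries of T to obtain a reducible tensor. -/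
open scoped Classical

/-- A tensor `T` (a function on the product of the index sets `ι j`) is *reducible with
respect to* the non-trivial partition `{J, Jᶜ}` of `{1,...,d}` if it factors as a tensor
product of a tensor on the `J`-coordinates with a tensor on the `Jᶜ`-coordinates. -/
def ReducibleWrt (F : Type*) [Field F] {d : ℕ} (ι : Fin d → Type*) (J : Finset (Fin d))
    (T : (∀ j, ι j) → F) : Prop :=
  ∃ (T₁ : (∀ j : {j // j ∈ J}, ι j.1) → F) (T₂ : (∀ j : {j // j ∉ J}, ι j.1) → F),
    ∀ x : ∀ j, ι j, T x = T₁ (fun j => x j.1) * T₂ (fun j => x j.1)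

/-- A tensor is *reducible* if it is reducible with respect to some non-trivial
partition. -/
def Reducible (F : Type*) [Field F] {d : ℕ} (ι : Fin d → Type*)
    (T : (∀ j, ι j) → F) : Prop :=
  ∃ J : Finset (Fin d), J ≠ ∅ ∧ J ≠ Finset.univ ∧ ReducibleWrt F ι J T

private lemma fiber_card {d : ℕ} (ι : Fin d → Type) [∀ j, Fintype (ι j)] (j : Fin d)
    (a : ι j) :
    ((Finset.univ : Finset (∀ k, ι k)).filter (fun x => x j = a)).card
        * Fintype.card (ι j) = ∏ k, Fintype.card (ι k) := by
  have e1 : {x : ∀ k, ι k // x j = a} ≃ {p : ι j × (∀ k : {k // k ≠ j}, ι k) // p.1 = a} :=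
    (Equiv.piSplitAt j ι).subtypeEquiv (fun x => Iff.rfl)
  have e2 : {p : ι j × (∀ k : {k // k ≠ j}, ι k) // p.1 = a} ≃ (∀ k : {k // k ≠ j}, ι k) :=
    { toFun := fun p => p.1.2
      invFun := fun b => ⟨(a, b), rfl⟩
      left_inv := fun p => by rcases p with ⟨⟨x, y⟩, h⟩; dsimp at h; subst h; rfl
      right_inv := fun b => rfl }
  have h1 : ((Finset.univ : Finset (∀ k, ι k)).filter (fun x => x j = a)).card
      = Fintype.card (∀ k : {k // k ≠ j}, ι k) := by
    rw [← Fintype.card_subtype]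
    exact Fintype.card_congr (e1.trans e2)
  rw [h1, ← Fintype.card_pi, mul_comm, ← Fintype.card_prod]
  exact (Fintype.card_congr (Equiv.piSplitAt j ι)).symm

/-- Fix `d ≥ 1`, `δ > 0` and (after choosing `n₀` large in terms of `d`
and `δ`) a field `F`. Let `T : I₁ × ... × I_d → F` be a tensor with `|I_j| ≥ n₀`, let
`{J, Jᶜ}` be a non-trivial partition of `{1,...,d}`, and suppose `T(i₁*,...,i_d*) ≠ 0`.
If all but at most a `δ`-fraction of the `2×...×2` subtensors of `T` containing the entry
`(i₁*,...,i_d*)` (indexed by choices `i_j ∈ I_j \ {i_j*}`, restricting `T` to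
`{i₁*,i₁} × ... × {i_d*,i_d}`) are reducible with respect to `{J, Jᶜ}`, then one can
change at most a `2δ`-fraction of the entries of `T` to obtain a reducible tensor. -/
theorem stmt16 (d : ℕ) (hd : 1 ≤ d) (δ : ℝ) (hδ : 0 < δ) :
    ∃ n₀ : ℕ, ∀ (F : Type) [instF : Field F],
      ∀ (ι : Fin d → Type) [instι : ∀ j, Fintype (ι j)],
      (∀ j, n₀ ≤ Fintype.card (ι j)) →
      ∀ (T : (∀ j, ι j) → F) (istar : ∀ j, ι j), T istar ≠ 0 →
      ∀ J : Finset (Fin d), J ≠ ∅ → J ≠ Finset.univ →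
      ((((Finset.univ : Finset (∀ j, ι j)).filter
          (fun i => (∀ j, i j ≠ istar j) ∧
            ¬ ReducibleWrt F (fun j => {x : ι j // x = istar j ∨ x = i j}) J
              (fun y => T (fun j => (y j).1)))).card : ℝ)
        ≤ δ * ∏ j, ((Fintype.card (ι j) : ℝ) - 1)) →
      ∃ T' : (∀ j, ι j) → F, Reducible F ι T' ∧
        (((Finset.univ : Finset (∀ j, ι j)).filter (fun x => T x ≠ T' x)).card : ℝ)
          ≤ 2 * δ * ∏ j, (Fintype.card (ι j) : ℝ) := by
  refine ⟨⌈(d : ℝ) / δ⌉₊ + 1, ?_⟩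
  intro F _ ι _ hcard T istar hT0 J hJne hJu hbad
  set n₀ : ℕ := ⌈(d : ℝ) / δ⌉₊ + 1 with hn₀def
  have hn₀pos : (0 : ℝ) < (n₀ : ℝ) := by positivity
  -- the modified tensor
  set m1 : (∀ j, ι j) → (∀ j, ι j) := fun x j => if j ∈ J then x j else istar j with hm1
  set m2 : (∀ j, ι j) → (∀ j, ι j) := fun x j => if j ∈ J then istar j else x j with hm2
  set T' : (∀ j, ι j) → F := fun x => T (m1 x) * T (m2 x) / T istar with hT'
  refine ⟨T', ⟨J, hJne, hJu, ?_⟩, ?_⟩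
  · refine ⟨fun y => T (fun j => if h : j ∈ J then y ⟨j, h⟩ else istar j),
      fun z => T (fun j => if h : j ∉ J then z ⟨j, h⟩ else istar j) / T istar, ?_⟩
    intro x
    have e1 : m1 x = fun j => if h : j ∈ J then x j else istar j := by
      funext j; by_cases h : j ∈ J <;> simp [hm1, h]
    have e2 : m2 x = fun j => if h : j ∉ J then x j else istar j := by
      funext j; by_cases h : j ∈ J <;> simp [hm2, h]
    simp only [hT', e1, e2, mul_div_assoc]
  · -- counting
    set Bad : Finset (∀ j, ι j) := (Finset.univ : Finset (∀ j, ι j)).filter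
          (fun i => (∀ j, i j ≠ istar j) ∧
            ¬ ReducibleWrt F (fun j => {x : ι j // x = istar j ∨ x = i j}) J
              (fun y => T (fun j => (y j).1))) with hBad
    have hsub : (Finset.univ : Finset (∀ j, ι j)).filter (fun x => T x ≠ T' x)
        ⊆ Bad ∪ Finset.univ.biUnion
            (fun j => (Finset.univ : Finset (∀ j, ι j)).filter (fun x => x j = istar j)) := by
      intro x hx
      rw [Finset.mem_filter] at hx
      obtain ⟨-, hxne⟩ := hx
      rw [Finset.mem_union]
      by_cases hA : ∀ j, x j ≠ istar j
      · left
        rw [hBad, Finset.mem_filter]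
        refine ⟨Finset.mem_univ _, hA, ?_⟩
        intro hred
        apply hxne
        obtain ⟨T₁, T₂, hfac⟩ := hred
        set a : ∀ j, {y : ι j // y = istar j ∨ y = x j} := fun j => ⟨istar j, Or.inl rfl⟩
          with ha
        set b : ∀ j, {y : ι j // y = istar j ∨ y = x j} := fun j => ⟨x j, Or.inr rfl⟩
          with hb
        have haa := hfac a
        have hbb := hfac b
        have hba := hfac (fun j => if j ∈ J then b j else a j)
        have hab := hfac (fun j => if j ∈ J then a j else b j)
        have eaa : (fun j => ((a j : {y : ι j // y = istar j ∨ y = x j}) : ι j)) = istar := rfl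
        have ebb : (fun j => ((b j : {y : ι j // y = istar j ∨ y = x j}) : ι j)) = x := rfl
        have eba : (fun j => (((if j ∈ J then b j else a j) :
            {y : ι j // y = istar j ∨ y = x j}) : ι j)) = m1 x := by
          funext j; by_cases h : j ∈ J <;> simp [hm1, ha, hb, h]
        have eab : (fun j => (((if j ∈ J then a j else b j) :
            {y : ι j // y = istar j ∨ y = x j}) : ι j)) = m2 x := by
          funext j; by_cases h : j ∈ J <;> simp [hm2, ha, hb, h]
        have r1 : (fun j : {j // j ∈ J} => if j.1 ∈ J then b j.1 else a j.1)
            = fun j : {j // j ∈ J} => b j.1 := by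
          funext j; rw [if_pos j.2]
        have r2 : (fun j : {j // j ∉ J} => if j.1 ∈ J then b j.1 else a j.1)
            = fun j : {j // j ∉ J} => a j.1 := by
          funext j; rw [if_neg j.2]
        have r3 : (fun j : {j // j ∈ J} => if j.1 ∈ J then a j.1 else b j.1)
            = fun j : {j // j ∈ J} => a j.1 := by
          funext j; rw [if_pos j.2]
        have r4 : (fun j : {j // j ∉ J} => if j.1 ∈ J then a j.1 else b j.1)
            = fun j : {j // j ∉ J} => b j.1 := by
          funext j; rw [if_neg j.2]
        simp only [eaa] at haa
        simp only [ebb] at hbb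
        simp only [eba, r1, r2] at hba
        simp only [eab, r3, r4] at hab
        have key : T x * T istar = T (m1 x) * T (m2 x) := by
          rw [haa, hbb, hba, hab]; ring
        simp only [hT']
        rw [← key, mul_div_cancel_right₀ _ hT0]
      · right
        push_neg at hA
        obtain ⟨j, hj⟩ := hA
        exact Finset.mem_biUnion.2 ⟨j, Finset.mem_univ _,
          Finset.mem_filter.2 ⟨Finset.mem_univ _, hj⟩⟩
    have hprodnn : (0 : ℝ) ≤ ∏ k, (Fintype.card (ι k) : ℝ) := by positivity
    have hAj : ∀ j : Fin d, (((Finset.univ : Finset (∀ j, ι j)).filter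
        (fun x => x j = istar j)).card : ℝ)
        ≤ (∏ k, (Fintype.card (ι k) : ℝ)) / n₀ := by
      intro j
      have h1 := fiber_card ι j (istar j)
      have h2 : (((Finset.univ : Finset (∀ j, ι j)).filter
          (fun x => x j = istar j)).card : ℝ) * (Fintype.card (ι j) : ℝ)
          = ∏ k, (Fintype.card (ι k) : ℝ) := by
        exact_mod_cast congrArg (Nat.cast : ℕ → ℝ) h1
      rw [le_div_iff₀ hn₀pos]
      calc (((Finset.univ : Finset (∀ j, ι j)).filter (fun x => x j = istar j)).card : ℝ)
            * (n₀ : ℝ)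
          ≤ (((Finset.univ : Finset (∀ j, ι j)).filter
              (fun x => x j = istar j)).card : ℝ) * (Fintype.card (ι j) : ℝ) := by
            apply mul_le_mul_of_nonneg_left _ (by positivity)
            exact_mod_cast hcard j
        _ = ∏ k, (Fintype.card (ι k) : ℝ) := h2
    have hdn : (d : ℝ) / (n₀ : ℝ) ≤ δ := by
      rw [div_le_iff₀ hn₀pos]
      have h1 : (d : ℝ) / δ ≤ (⌈(d : ℝ) / δ⌉₊ : ℝ) := Nat.le_ceil _
      have h2 : (⌈(d : ℝ) / δ⌉₊ : ℝ) ≤ (n₀ : ℝ) := by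
        rw [hn₀def]; push_cast; linarith
      calc (d : ℝ) = ((d : ℝ) / δ) * δ := by field_simp
        _ ≤ (n₀ : ℝ) * δ := by nlinarith
        _ = δ * (n₀ : ℝ) := mul_comm _ _
    have hcard1 : (((Finset.univ : Finset (∀ j, ι j)).filter
        (fun x => T x ≠ T' x)).card : ℝ)
        ≤ (Bad.card : ℝ) + ∑ j : Fin d, (((Finset.univ : Finset (∀ j, ι j)).filter
            (fun x => x j = istar j)).card : ℝ) := by
      have h1 := Finset.card_le_card hsub
      have h2 := Finset.card_union_le Bad (Finset.univ.biUnion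
          (fun j => (Finset.univ : Finset (∀ j, ι j)).filter (fun x => x j = istar j)))
      have h3 : (Finset.univ.biUnion (fun j : Fin d =>
            (Finset.univ : Finset (∀ j, ι j)).filter (fun x => x j = istar j))).card
          ≤ ∑ j : Fin d, ((Finset.univ : Finset (∀ j, ι j)).filter
            (fun x => x j = istar j)).card := Finset.card_biUnion_le
      have : ((Finset.univ : Finset (∀ j, ι j)).filter (fun x => T x ≠ T' x)).card
          ≤ Bad.card + ∑ j : Fin d, ((Finset.univ : Finset (∀ j, ι j)).filter
            (fun x => x j = istar j)).card :=
        le_trans h1 (le_trans h2 (Nat.add_le_add_left h3 Bad.card))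
      exact_mod_cast this
    have hBadle : (Bad.card : ℝ) ≤ δ * ∏ k, (Fintype.card (ι k) : ℝ) := by
      refine le_trans hbad ?_
      apply mul_le_mul_of_nonneg_left _ (le_of_lt hδ)
      apply Finset.prod_le_prod
      · intro k _
        have : (1 : ℝ) ≤ (Fintype.card (ι k) : ℝ) := by
          have := hcard k
          have : 1 ≤ Fintype.card (ι k) := by omega
          exact_mod_cast this
        linarith
      · intro k _; linarith
    have hsum : ∑ j : Fin d, (((Finset.univ : Finset (∀ j, ι j)).filter
          (fun x => x j = istar j)).card : ℝ)
        ≤ δ * ∏ k, (Fintype.card (ι k) : ℝ) := by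
      calc ∑ j : Fin d, (((Finset.univ : Finset (∀ j, ι j)).filter
              (fun x => x j = istar j)).card : ℝ)
          ≤ ∑ _j : Fin d, (∏ k, (Fintype.card (ι k) : ℝ)) / n₀ :=
            Finset.sum_le_sum (fun j _ => hAj j)
        _ = (d : ℝ) * ((∏ k, (Fintype.card (ι k) : ℝ)) / n₀) := by
            rw [Finset.sum_const, Finset.card_univ, Fintype.card_fin, nsmul_eq_mul]
        _ = ((d : ℝ) / n₀) * ∏ k, (Fintype.card (ι k) : ℝ) := by ring
        _ ≤ δ * ∏ k, (Fintype.card (ι k) : ℝ) :=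
            mul_le_mul_of_nonneg_right hdn hprodnn
    calc (((Finset.univ : Finset (∀ j, ι j)).filter (fun x => T x ≠ T' x)).card : ℝ)
        ≤ (Bad.card : ℝ) + ∑ j : Fin d, (((Finset.univ : Finset (∀ j, ι j)).filter
            (fun x => x j = istar j)).card : ℝ) := hcard1
      _ ≤ δ * ∏ k, (Fintype.card (ι k) : ℝ) + δ * ∏ k, (Fintype.card (ι k) : ℝ) :=
          add_le_add hBadle hsum
      _ = 2 * δ * ∏ j, (Fintype.card (ι j) : ℝ) := by ring
end

section
/- Let G be a torsion-free abelian group, let q ∈ ℕ and 0 < δ < 1/2, let n be sufficiently large in terms of δ and q, and let v₁,...,v_n ∈ G. Let ξ₁,...,ξ_n be i.i.d. Rademacher random variables. Assume the Nguyen–Vu optimal inverse theorem: for any C > 0, if ρ := sup_z Pr[ξ₁v₁ + ... + ξ_nv_n = z] > n^{−C}, then for any √n ≤ n' ≤ n there is a symmetric GAP of some rank r = O_C(1) and volume O_C(ρ^{−1}(n')^{−r/2}) containing all but at most n' of the v_i. Then sup_{z∈G} Pr[ξ₁v₁ + ... + ξ_nv_n = z] ≤ n^{−q/2 + qδ} +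 Σ_{r=0}^{q−1} n^{−r/2 + qδ} / h_r^δ(v), where h_r^δ(v) is the minimum volume of a symmetric GAP of rank at most r containing all but at most n^{1−δ} of v₁,...,v_n (and h_r^δ(v) = ∞ if no such GAP exists). -/
open scoped Classical

/-- The Rademacher sum `ξ₁v₁ + ... + ξ_nv_n`, where the sign `ξᵢ = ±1` is modelled by a
Boolean. -/
def radSum {G : Type*} [AddCommGroup G] {n : ℕ} (v : Fin n → G) (ξ : Fin n → Bool) : G :=
  ∑ i, (if ξ i then (1 : ℤ) else (-1 : ℤ)) • v i

/-- The probability of an event under `n` i.i.d. Rademacher random variables (uniform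
counting measure on `{-1,1}^n`, modelled as `Fin n → Bool`). -/
noncomputable def radProb (n : ℕ) (P : (Fin n → Bool) → Prop) : ℝ :=
  (((Finset.univ : Finset (Fin n → Bool)).filter P).card : ℝ) / 2 ^ n

/-- Membership of `g` in the image of the symmetric GAP
`(a₁,...,a_{r'}) ↦ a₁w₁ + ... + a_{r'}w_{r'}`, `|aᵢ| ≤ Nᵢ`. -/
def memGAP {G : Type*} [AddCommGroup G] {r' : ℕ} (N : Fin r' → ℕ) (w : Fin r' → G)
    (g : G) : Prop :=
  ∃ a : Fin r' → ℤ, (∀ t, |a t| ≤ (N t : ℤ)) ∧ g = ∑ t, a t • w t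

/-- `h_r^δ(v)`: the minimum volume of a symmetric GAP of rank at most `r` containing all
but at most `n^{1-δ}` of `v₁,...,v_n`. (If no such GAP exists the set below is empty and
`Real.sInf` gives the junk value `0`; correspondingly, division by it below yields `0`,
matching the convention `h_r^δ(v) = ∞`, `x/∞ = 0`.) -/
noncomputable def hVol (n : ℕ) (δ : ℝ) {G : Type*} [AddCommGroup G] (v : Fin n → G)
    (r : ℕ) : ℝ :=
  sInf {V : ℝ | ∃ r' : ℕ, r' ≤ r ∧ ∃ (N : Fin r' → ℕ) (w : Fin r' → G),
    V = ∏ t, (2 * (N t : ℝ) + 1) ∧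
    (((Finset.univ : Finset (Fin n)).filter (fun i => ¬ memGAP N w (v i))).card : ℝ)
      ≤ (n : ℝ) ^ (1 - δ)}

/-!
If `ρ = sup_z Pr[∑ ξᵢvᵢ = z]` is at most `n^{-C}` with `C = q(1/2 - δ)`, the first term already
bounds it. Otherwise the inverse theorem, applied with `n' = n^{1-δ}`, yields a GAP of rank `r'`
and volume `V` with `ρ V ≲ n^{-(1-δ)r'/2}`, where the constant is absorbed into `n^{qδ/2}`
for large `n`. If `r' ≥ q` this gives `ρ ≤ n^{-q/2+qδ}` since `V ≥ 1`; if `r' < q` the GAP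
competes in the definition of `h_{r'}^δ(v)`, so `h_{r'}^δ(v) ≤ V` and `ρ` is bounded by the
`r'`-th term of the sum.
-/

open Finset

lemma radProb_le_one (n : ℕ) (P : (Fin n → Bool) → Prop) : radProb n P ≤ 1 := by
  unfold radProb
  rw [div_le_one (by positivity)]
  calc ((univ.filter P).card : ℝ) ≤ (univ : Finset (Fin n → Bool)).card := by
        exact_mod_cast card_filter_le _ _
    _ = 2 ^ n := by simp

lemma radProb_le_iSup {G : Type*} [AddCommGroup G] {n : ℕ} (v : Fin n → G) (z : G) :
    radProb n (fun ξ => radSum v ξ = z) ≤ ⨆ z, radProb n (fun ξ => radSum v ξ = z) :=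
  le_ciSup (f := fun z => radProb n (fun ξ => radSum v ξ = z))
    ⟨1, by rintro _ ⟨z, rfl⟩; exact radProb_le_one _ _⟩ z

lemma one_le_prod_two_mul_add_one {ι : Type*} [Fintype ι] (N : ι → ℕ) :
    1 ≤ ∏ t, (2 * (N t : ℝ) + 1) :=
  one_le_prod fun t _ => by linarith [(N t).cast_nonneg (α := ℝ)]

lemma exists_forall_le_natCast_rpow (c : ℝ) {e : ℝ} (he : 0 < e) :
    ∃ N₀ : ℕ, ∀ n : ℕ, N₀ ≤ n → c ≤ (n : ℝ) ^ e :=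
  Filter.eventually_atTop.1 <|
    ((tendsto_rpow_atTop he).comp tendsto_natCast_atTop_atTop).eventually_ge_atTop c

section hVol

variable {G : Type*} [AddCommGroup G] {n : ℕ} {δ : ℝ} {v : Fin n → G}

noncomputable def gapMisses {r' : ℕ} (N : Fin r' → ℕ) (w : Fin r' → G) (v : Fin n → G) : ℕ :=
  (univ.filter fun i => ¬ memGAP N w (v i)).card

lemma hVol_nonneg (n : ℕ) (δ : ℝ) (v : Fin n → G) (r : ℕ) : 0 ≤ hVol n δ v r :=
  Real.sInf_nonneg <| by rintro _ ⟨_, -, N, -, rfl, -⟩; positivity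

lemma sum_rpow_div_hVol_nonneg (q : ℕ) (e : ℕ → ℝ) :
    0 ≤ ∑ r ∈ range q, (n : ℝ) ^ e r / hVol n δ v r :=
  sum_nonneg fun r _ => div_nonneg (by positivity) (hVol_nonneg n δ v r)

variable {r r' : ℕ} {N : Fin r' → ℕ} {w : Fin r' → G}

lemma hVol_le_prod (hr : r' ≤ r) (hcover : (gapMisses N w v : ℝ) ≤ (n : ℝ) ^ (1 - δ)) :
    hVol n δ v r ≤ ∏ t, (2 * (N t : ℝ) + 1) :=
  csInf_le ⟨1, by rintro _ ⟨_, -, N', -, rfl, -⟩; exact one_le_prod_two_mul_add_one N'⟩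
    ⟨r', hr, N, w, rfl, hcover⟩

lemma one_le_hVol (hr : r' ≤ r) (hcover : (gapMisses N w v : ℝ) ≤ (n : ℝ) ^ (1 - δ)) :
    1 ≤ hVol n δ v r :=
  le_csInf ⟨_, r', hr, N, w, rfl, hcover⟩ <| by
    rintro _ ⟨_, -, N', -, rfl, -⟩; exact one_le_prod_two_mul_add_one N'

lemma le_of_gap_cover {q : ℕ} {ρ K : ℝ} (hn : 1 ≤ (n : ℝ)) (hδ0 : 0 ≤ δ) (hδ1 : δ ≤ 1)
    (hK : K ≤ (n : ℝ) ^ ((q : ℝ) * δ / 2)) (hρ : 0 < ρ)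
    (hvol : ∏ t, (2 * (N t : ℝ) + 1) ≤ K * ρ⁻¹ * ((n : ℝ) ^ (1 - δ)) ^ (-(r' : ℝ) / 2))
    (hcover : (gapMisses N w v : ℝ) ≤ (n : ℝ) ^ (1 - δ)) :
    ρ ≤ (n : ℝ) ^ (-(q : ℝ) / 2 + q * δ) +
      ∑ r ∈ range q, (n : ℝ) ^ (-(r : ℝ) / 2 + q * δ) / hVol n δ v r := by
  set V := ∏ t, (2 * (N t : ℝ) + 1)
  have hn0 : (0 : ℝ) < n := one_pos.trans_le hn
  have hρV : ρ * V ≤ (n : ℝ) ^ ((q : ℝ) * δ / 2 - (1 - δ) * r' / 2) :=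
    calc ρ * V ≤ ρ * (K * ρ⁻¹ * ((n : ℝ) ^ (1 - δ)) ^ (-(r' : ℝ) / 2)) := by gcongr
      _ = K * ((n : ℝ) ^ (1 - δ)) ^ (-(r' : ℝ) / 2) := by field_simp
      _ ≤ (n : ℝ) ^ ((q : ℝ) * δ / 2) * ((n : ℝ) ^ (1 - δ)) ^ (-(r' : ℝ) / 2) := by gcongr
      _ = _ := by rw [← Real.rpow_mul hn0.le, ← Real.rpow_add hn0]; ring_nf
  rcases lt_or_ge r' q with hlow | hhigh
  · have hrq : (r' : ℝ) ≤ q := by exact_mod_cast hlow.le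
    have hh1 := one_le_hVol (δ := δ) le_rfl hcover
    have hterm : ρ ≤ (n : ℝ) ^ (-(r' : ℝ) / 2 + q * δ) / hVol n δ v r' := by
      rw [le_div_iff₀ (one_pos.trans_le hh1)]
      calc ρ * hVol n δ v r' ≤ ρ * V := by gcongr; exact hVol_le_prod le_rfl hcover
        _ ≤ _ := hρV.trans <| Real.rpow_le_rpow_of_exponent_le hn <| by nlinarith
    refine hterm.trans <| le_add_of_nonneg_of_le (by positivity) ?_
    exact single_le_sum (f := fun r : ℕ => (n : ℝ) ^ (-(r : ℝ) / 2 + q * δ) / hVol n δ v r)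
      (fun r _ => div_nonneg (by positivity) (hVol_nonneg n δ v r)) (mem_range.2 hlow)
  · have hqr : (q : ℝ) ≤ r' := by exact_mod_cast hhigh
    calc ρ ≤ ρ * V := le_mul_of_one_le_right hρ.le (one_le_prod_two_mul_add_one N)
      _ ≤ (n : ℝ) ^ (-(q : ℝ) / 2 + q * δ) :=
          hρV.trans <| Real.rpow_le_rpow_of_exponent_le hn <| by nlinarith
      _ ≤ _ := le_add_of_nonneg_right (sum_rpow_div_hVol_nonneg q _)

end hVol

/-- Let `G` be a torsion-free abelian group, `q ∈ ℕ`, `0 < δ < 1/2`, `n`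
sufficiently large in terms of `δ` and `q` (and the constants `rB`, `K` of the assumed
inverse theorem), and `v₁,...,v_n ∈ G`. Assume the Nguyen–Vu optimal inverse theorem:
for any `C > 0`, if `ρ := sup_z Pr[ξ₁v₁ + ... + ξ_nv_n = z] > n^{-C}`, then for any
`√n ≤ n' ≤ n` there is a symmetric GAP of some rank `r' ≤ rB C` and volume at most
`K C · ρ⁻¹ · (n')^{-r'/2}` containing all but at most `n'` of the `vᵢ`. Then
`sup_z Pr[ξ₁v₁ + ... + ξ_nv_n = z] ≤ n^{-q/2+qδ} + ∑_{r=0}^{q-1} n^{-r/2+qδ} / h_r^δ(v)`. -/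
theorem stmt17 (q : ℕ) (δ : ℝ) (hδ0 : 0 < δ) (hδ2 : δ < 1 / 2)
    (rB : ℝ → ℕ) (K : ℝ → ℝ) :
    ∃ N₀ : ℕ, ∀ n : ℕ, N₀ ≤ n →
    ∀ (G : Type) [instG : AddCommGroup G],
    (∀ (g : G) (m : ℕ), 0 < m → m • g = 0 → g = 0) →
    ∀ v : Fin n → G,
    (∀ C : ℝ, 0 < C →
      ∀ ρ : ℝ, ρ = (⨆ z : G, radProb n (fun ξ => radSum v ξ = z)) →
      (n : ℝ) ^ (-C) < ρ →
      ∀ n' : ℝ, Real.sqrt n ≤ n' → n' ≤ n →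
      ∃ r' : ℕ, r' ≤ rB C ∧ ∃ (N : Fin r' → ℕ) (w : Fin r' → G),
        (∏ t, (2 * (N t : ℝ) + 1)) ≤ K C * ρ⁻¹ * n' ^ (-(r' : ℝ) / 2) ∧
        (((Finset.univ : Finset (Fin n)).filter (fun i => ¬ memGAP N w (v i))).card : ℝ)
          ≤ n') →
    ∀ z : G, radProb n (fun ξ => radSum v ξ = z) ≤
      (n : ℝ) ^ (-(q : ℝ) / 2 + q * δ) +
        ∑ r ∈ Finset.range q, (n : ℝ) ^ (-(r : ℝ) / 2 + q * δ) / hVol n δ v r := by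
  rcases q.eq_zero_or_pos with rfl | hq
  · exact ⟨0, fun n _ G _ _ v _ z => by simpa using radProb_le_one n _⟩
  set C : ℝ := q * (1 / 2 - δ)
  have hC : 0 < C := mul_pos (by exact_mod_cast hq) (by linarith)
  obtain ⟨N₀, hN₀⟩ := exists_forall_le_natCast_rpow (K C) (by positivity : 0 < (q : ℝ) * δ / 2)
  refine ⟨max N₀ 1, fun n hn G _ _ v hinv z => ?_⟩
  have hn1 : (1 : ℝ) ≤ n := by exact_mod_cast (le_max_right N₀ 1).trans hn
  set ρ := ⨆ z, radProb n (fun ξ => radSum v ξ = z) with hρ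
  refine (radProb_le_iSup v z).trans ?_
  rcases le_or_gt ρ ((n : ℝ) ^ (-C)) with hsmall | hlarge
  · refine hsmall.trans (le_add_of_le_of_nonneg (le_of_eq ?_) (sum_rpow_div_hVol_nonneg q _))
    congr 1; ring
  · have hsqrt : Real.sqrt n ≤ (n : ℝ) ^ (1 - δ) := by
      rw [Real.sqrt_eq_rpow]; exact Real.rpow_le_rpow_of_exponent_le hn1 (by linarith)
    obtain ⟨r', -, N, w, hvol, hcover⟩ := hinv C hC ρ hρ hlarge _ hsqrt
      (Real.rpow_le_self_of_one_le hn1 (by linarith))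
    exact le_of_gap_cover hn1 hδ0.le (by linarith) (hN₀ n ((le_max_left N₀ 1).trans hn))
      ((Real.rpow_nonneg (by positivity) _).trans_lt hlarge) hvol hcover
end

section
/- For any V ≥ 1 and integers r, m ≥ 1 with r ≤ m, the number of integer matrices Z ∈ ℤ^{r×m} with the property that there exist N₁,...,N_r ∈ ℕ with (2N₁+1)(2N₂+1)···(2N_r+1) ≤ V and every entry in the i-th row of Z having absolute value at most N_i, is at most C_m · V^m · (1 + log V)^{r−1}, where C_m depends only on m. -/
/-!
Call `2 * ‖x‖∞ + 1` the width of a row `x ∈ ℤ^d`; taking each `Nᵢ` to be the sup norm of row `i`,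
one counts the matrices whose row widths have product at most `V`. Fixing the first row `x`
leaves a matrix with one row fewer and product at most `V / width x`, so by induction on the
number of rows it suffices that `∑ width(x)^(-d)` over the rows with `width x ≤ V` is at most
`2d (1 + log V)`. Exactly `(2n+1)^d - (2n-1)^d ≤ 2d (2n+1)^(d-1)` rows have width `2n+1`
(Bernoulli's inequality), so that sum is at most `2d` times a harmonic sum.
-/

open Finset

namespace IntBox

variable {ι : Type*} [Fintype ι]

def supNorm (x : ι → ℤ) : ℕ := univ.sup fun j => (x j).natAbs

def boxWidth (x : ι → ℤ) : ℕ := 2 * supNorm x + 1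

lemma boxWidth_pos (x : ι → ℤ) : 0 < boxWidth x := Nat.succ_pos _

lemma supNorm_le_iff {x : ι → ℤ} {n : ℕ} : supNorm x ≤ n ↔ ∀ j, |x j| ≤ n := by
  simp only [supNorm, Finset.sup_le_iff, mem_univ, true_implies, Int.abs_eq_natAbs, Nat.cast_le]

lemma exists_row_bounds_iff {r : ℕ} (Z : Fin r → ι → ℤ) (V : ℝ) :
    (∃ N : Fin r → ℕ, ∏ i, (2 * (N i : ℝ) + 1) ≤ V ∧ ∀ i j, |Z i j| ≤ (N i : ℤ)) ↔
      ((∏ i, boxWidth (Z i) : ℕ) : ℝ) ≤ V := by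
  constructor
  · rintro ⟨N, hNV, hZN⟩
    refine le_trans ?_ hNV
    push_cast
    refine prod_le_prod (fun i _ => by positivity) fun i _ => ?_
    rw [boxWidth]
    push_cast
    gcongr
    exact_mod_cast supNorm_le_iff.2 (hZN i)
  · intro h
    refine ⟨fun i => supNorm (Z i), by simpa [boxWidth] using h, fun i => supNorm_le_iff.1 le_rfl⟩

variable [DecidableEq ι]

variable (ι) in
noncomputable def box (n : ℕ) : Finset (ι → ℤ) := Fintype.piFinset fun _ => Icc (-(n : ℤ)) n

lemma mem_box {n : ℕ} {x : ι → ℤ} : x ∈ box ι n ↔ supNorm x ≤ n := by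
  simp only [box, Fintype.mem_piFinset, mem_Icc, supNorm_le_iff, abs_le]

lemma card_box (n : ℕ) : #(box ι n) = (2 * n + 1) ^ Fintype.card ι := by
  simp only [box, Fintype.card_piFinset, Int.card_Icc, prod_const, card_univ]
  congr 1
  omega

lemma box_mono {a b : ℕ} (h : a ≤ b) : box ι a ⊆ box ι b :=
  fun _ hx => mem_box.2 ((mem_box.1 hx).trans h)

lemma boxWidth_of_mem_box_sdiff {n : ℕ} {x : ι → ℤ} (hx : x ∈ box ι (n + 1) \ box ι n) :
    boxWidth x = 2 * n + 3 := by
  rw [mem_sdiff, mem_box, mem_box] at hx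
  rw [boxWidth]
  omega

lemma pow_sub_pow_div_pow_le {a b : ℝ} (ha : 0 < a) (hb : 0 ≤ b) (d : ℕ) :
    (a ^ d - b ^ d) / a ^ d ≤ d * (a - b) / a := by
  have bernoulli := one_add_mul_le_pow (a := b / a - 1) (by linarith [div_nonneg hb ha.le]) d
  rw [add_sub_cancel, div_pow] at bernoulli
  have hpow : 0 < a ^ d := pow_pos ha d
  have hdiv : d * (a - b) / a = d * (1 - b / a) := by field_simp
  rw [div_le_iff₀ hpow, hdiv]
  rw [le_div_iff₀ hpow] at bernoulli
  linarith

lemma sum_inv_boxWidth_pow_le (hι : 1 ≤ Fintype.card ι) (N : ℕ) :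
    ∑ x ∈ box ι N, ((boxWidth x : ℝ) ^ Fintype.card ι)⁻¹
      ≤ 2 * Fintype.card ι * (harmonic (N + 1) : ℝ) := by
  set d := Fintype.card ι
  induction N with
  | zero =>
    have hwidth (x) (hx : x ∈ box ι 0) : boxWidth x = 1 := by
      rw [boxWidth, Nat.le_zero.1 (mem_box.1 hx)]
    rw [sum_congr rfl fun x hx => by rw [hwidth x hx], sum_const, card_box]
    have : (1 : ℝ) ≤ d := by exact_mod_cast hι
    norm_num
    linarith
  | succ N ih =>
    have hshell : ∑ x ∈ box ι (N + 1) \ box ι N, ((boxWidth x : ℝ) ^ d)⁻¹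
        ≤ 2 * d * ((N + 1 + 1 : ℕ) : ℝ)⁻¹ := by
      rw [sum_congr rfl fun x hx => by rw [boxWidth_of_mem_box_sdiff hx], sum_const,
        card_sdiff_of_subset (box_mono (Nat.le_add_right N 1)), card_box, card_box, nsmul_eq_mul,
        Nat.cast_sub (Nat.pow_le_pow_left (by omega) _)]
      have key := pow_sub_pow_div_pow_le (a := 2 * N + 3) (b := 2 * N + 1) (by positivity)
        (by positivity) d
      rw [show (2 * N + 3 : ℝ) - (2 * N + 1) = 2 by ring] at key
      push_cast
      calc _ = ((2 * N + 3 : ℝ) ^ d - (2 * N + 1) ^ d) / (2 * N + 3) ^ d := by ring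
        _ ≤ d * 2 / (2 * N + 3) := key
        _ ≤ 2 * d * ((N : ℝ) + 1 + 1)⁻¹ := by
          rw [← div_eq_mul_inv, mul_comm]
          exact div_le_div_of_nonneg_left (by positivity) (by positivity) (by linarith)
    rw [← sum_sdiff (box_mono (Nat.le_add_right N 1)), harmonic_succ]
    push_cast at ih hshell ⊢
    linarith

/-- For `1 ≤ V`, the largest `N` with `2 * N + 1 ≤ V`. -/
noncomputable def boxRadius (V : ℝ) : ℕ := ⌊(V - 1) / 2⌋₊

lemma le_boxRadius {n : ℕ} {V : ℝ} (h : 2 * (n : ℝ) + 1 ≤ V) : n ≤ boxRadius V :=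
  Nat.le_floor (by linarith)

lemma two_mul_boxRadius_add_one_le {V : ℝ} (hV : 1 ≤ V) : 2 * (boxRadius V : ℝ) + 1 ≤ V := by
  have := Nat.floor_le (a := (V - 1) / 2) (by linarith)
  rw [boxRadius]
  linarith

lemma harmonic_boxRadius_succ_le {V : ℝ} (hV : 1 ≤ V) :
    (harmonic (boxRadius V + 1) : ℝ) ≤ 1 + Real.log V := by
  have hR := two_mul_boxRadius_add_one_le hV
  calc (harmonic (boxRadius V + 1) : ℝ) ≤ 1 + Real.log (boxRadius V + 1 : ℕ) :=
        harmonic_le_one_add_log _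
    _ ≤ 1 + Real.log V := by
        gcongr
        push_cast
        linarith [(boxRadius V).cast_nonneg (α := ℝ)]

variable (ι) in
noncomputable def lowWidthMatrices (r : ℕ) (V : ℝ) : Finset (Fin r → ι → ℤ) :=
  (Fintype.piFinset fun _ => box ι (boxRadius V)).filter
    fun Z => ((∏ i, boxWidth (Z i) : ℕ) : ℝ) ≤ V

lemma mem_lowWidthMatrices {r : ℕ} {V : ℝ} {Z : Fin r → ι → ℤ} :
    Z ∈ lowWidthMatrices ι r V ↔ ((∏ i, boxWidth (Z i) : ℕ) : ℝ) ≤ V := by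
  refine ⟨fun h => (mem_filter.1 h).2, fun h => mem_filter.2 ⟨Fintype.mem_piFinset.2 fun i => ?_, h⟩⟩
  have hi : boxWidth (Z i) ≤ ∏ i, boxWidth (Z i) :=
    single_le_prod' (f := fun i => boxWidth (Z i)) (fun _ _ => boxWidth_pos _) (mem_univ i)
  have : ((boxWidth (Z i) : ℕ) : ℝ) ≤ V := (Nat.cast_le.2 hi).trans h
  rw [boxWidth] at this
  push_cast at this
  exact mem_box.2 (le_boxRadius this)

lemma card_lowWidthMatrices_succ_le (r : ℕ) (V : ℝ) :
    #(lowWidthMatrices ι (r + 1) V)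
      ≤ ∑ x ∈ box ι (boxRadius V), #(lowWidthMatrices ι r (V / boxWidth x)) := by
  rw [← card_sigma]
  refine card_le_card_of_injOn (fun Z => ⟨Z 0, Fin.tail Z⟩) (fun Z hZ => ?_) ?_
  · rw [mem_coe, mem_sigma]
    refine ⟨Fintype.mem_piFinset.1 (mem_filter.1 hZ).1 0, ?_⟩
    rw [mem_lowWidthMatrices, le_div_iff₀ (Nat.cast_pos.2 (boxWidth_pos _)), mul_comm]
    rw [mem_coe, mem_lowWidthMatrices, Fin.prod_univ_succ] at hZ
    exact_mod_cast hZ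
  · intro Z _ Z' _ h
    simp only [Sigma.mk.inj_iff, heq_eq_eq] at h
    rw [← Fin.cons_self_tail Z, ← Fin.cons_self_tail Z', h.1, h.2]

lemma card_lowWidthMatrices_le (hι : 1 ≤ Fintype.card ι) (r : ℕ) {V : ℝ} (hV : 1 ≤ V) :
    (#(lowWidthMatrices ι (r + 1) V) : ℝ)
      ≤ (2 * Fintype.card ι) ^ r * V ^ Fintype.card ι * (1 + Real.log V) ^ r := by
  set d := Fintype.card ι
  induction r generalizing V with
  | zero =>
    have hR := two_mul_boxRadius_add_one_le hV
    calc (#(lowWidthMatrices ι (0 + 1) V) : ℝ)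
        ≤ ∑ x ∈ box ι (boxRadius V), (#(lowWidthMatrices ι 0 (V / boxWidth x)) : ℝ) := by
          exact_mod_cast card_lowWidthMatrices_succ_le 0 V
      _ ≤ ∑ x ∈ box ι (boxRadius V), (1 : ℝ) := sum_le_sum fun x _ => by
          exact_mod_cast card_le_one.2 fun a _ b _ => Subsingleton.elim a b
      _ = (2 * boxRadius V + 1) ^ d := by simp [card_box, d]
      _ ≤ (2 * d) ^ 0 * V ^ d * (1 + Real.log V) ^ 0 := by
          simpa using pow_le_pow_left₀ (by positivity) hR d
  | succ r ih =>
    have hR := two_mul_boxRadius_add_one_le hV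
    set B := (2 * d : ℝ) ^ r * V ^ d * (1 + Real.log V) ^ r
    have hlogV : 0 ≤ Real.log V := Real.log_nonneg hV
    have hterm : ∀ x ∈ box ι (boxRadius V),
        (#(lowWidthMatrices ι (r + 1) (V / boxWidth x)) : ℝ) ≤ B * ((boxWidth x : ℝ) ^ d)⁻¹ := by
      intro x hx
      have hw : 1 ≤ (boxWidth x : ℝ) := by exact_mod_cast boxWidth_pos x
      have hwR : (boxWidth x : ℝ) ≤ V := by
        refine le_trans ?_ hR
        rw [boxWidth]
        push_cast
        gcongr
        exact_mod_cast mem_box.1 hx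
      have hVw : 1 ≤ V / boxWidth x := by rwa [le_div_iff₀ (by positivity), one_mul]
      have hlog : 0 ≤ Real.log (V / boxWidth x) := Real.log_nonneg hVw
      calc (#(lowWidthMatrices ι (r + 1) (V / boxWidth x)) : ℝ)
          ≤ (2 * d) ^ r * (V / boxWidth x) ^ d * (1 + Real.log (V / boxWidth x)) ^ r := ih hVw
        _ ≤ (2 * d) ^ r * (V / boxWidth x) ^ d * (1 + Real.log V) ^ r := by
            gcongr
            exact div_le_self (by positivity) hw
        _ = B * ((boxWidth x : ℝ) ^ d)⁻¹ := by
            rw [div_pow, div_eq_mul_inv]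
            ring
    calc (#(lowWidthMatrices ι (r + 1 + 1) V) : ℝ)
        ≤ ∑ x ∈ box ι (boxRadius V), (#(lowWidthMatrices ι (r + 1) (V / boxWidth x)) : ℝ) := by
          exact_mod_cast card_lowWidthMatrices_succ_le (r + 1) V
      _ ≤ ∑ x ∈ box ι (boxRadius V), B * ((boxWidth x : ℝ) ^ d)⁻¹ := sum_le_sum hterm
      _ = B * ∑ x ∈ box ι (boxRadius V), ((boxWidth x : ℝ) ^ d)⁻¹ := by rw [mul_sum]
      _ ≤ B * (2 * d * (1 + Real.log V)) := by
          gcongr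
          exact (sum_inv_boxWidth_pow_le hι _).trans
            (by gcongr; exact harmonic_boxRadius_succ_le hV)
      _ = (2 * d) ^ (r + 1) * V ^ d * (1 + Real.log V) ^ (r + 1) := by ring

end IntBox

open IntBox in
/-- For every `m ≥ 1` there is a constant `C_m` such that for all
`1 ≤ r ≤ m` and all real `V ≥ 1`, the set of integer matrices `Z ∈ ℤ^{r×m}` for which
there exist `N₁,...,N_r ∈ ℕ` with `(2N₁+1)···(2N_r+1) ≤ V` and every entry in the `i`-th
row of `Z` of absolute value at most `Nᵢ`, is finite and has at most
`C_m · V^m · (1 + log V)^{r−1}` elements. -/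
theorem stmt18 (m : ℕ) (hm : 1 ≤ m) :
    ∃ C : ℝ, 0 < C ∧ ∀ (r : ℕ), 1 ≤ r → r ≤ m → ∀ V : ℝ, 1 ≤ V →
      {Z : Matrix (Fin r) (Fin m) ℤ | ∃ N : Fin r → ℕ,
          (∏ i, (2 * (N i : ℝ) + 1)) ≤ V ∧ ∀ i j, |Z i j| ≤ (N i : ℤ)}.Finite ∧
      ({Z : Matrix (Fin r) (Fin m) ℤ | ∃ N : Fin r → ℕ,
          (∏ i, (2 * (N i : ℝ) + 1)) ≤ V ∧ ∀ i j, |Z i j| ≤ (N i : ℤ)}.ncard : ℝ)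
        ≤ C * V ^ m * (1 + Real.log V) ^ (r - 1) := by
  refine ⟨(2 * m) ^ m, by positivity, fun r hr hrm V hV => ?_⟩
  obtain ⟨s, rfl⟩ : ∃ s, r = s + 1 := ⟨r - 1, by omega⟩
  have hset : {Z : Matrix (Fin (s + 1)) (Fin m) ℤ | ∃ N : Fin (s + 1) → ℕ,
      (∏ i, (2 * (N i : ℝ) + 1)) ≤ V ∧ ∀ i j, |Z i j| ≤ (N i : ℤ)}
        = (lowWidthMatrices (Fin m) (s + 1) V : Set (Fin (s + 1) → Fin m → ℤ)) :=
    Set.ext fun Z => (exists_row_bounds_iff Z V).trans mem_lowWidthMatrices.symm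
  have hcard := card_lowWidthMatrices_le (ι := Fin m) (by simpa using hm) s hV
  simp only [Fintype.card_fin] at hcard
  rw [hset, Nat.add_sub_cancel]
  refine ⟨finite_toSet _, (congrArg Nat.cast (Set.ncard_coe_finset _)).trans_le (hcard.trans ?_)⟩
  have h2m : (1 : ℝ) ≤ 2 * m := by norm_cast; omega
  have hlog : 0 ≤ 1 + Real.log V := by linarith [Real.log_nonneg hV]
  gcongr
  omega
end
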